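/- arXiv:2107.00937 — 4 statements merged into one kernel-verified Lean document; each statement's English description precedes it below -/
import Mathlib

section
/- Let T and T' be two acute labeled triangles in the Euclidean plane. Then every label-preserving homeomorphism f from T to T' satisfies L(f) ≥ max{‖e'₁‖/‖e₁‖, ‖e'₂‖/‖e₂‖, ‖e'₃‖/‖e₃‖, ‖h'₁‖/‖h₁‖, ‖h'₂‖/‖h₂‖, ‖h'₃‖/‖h₃‖}; consequently Λ(T,T') ≥ max{‖e'₁‖/‖e₁‖, ‖e'₂‖/‖e₂‖, ‖e'₃‖/‖e₃‖, ‖h'₁‖/‖h₁‖, ‖h'₂‖/‖h₂‖, ‖h'₃‖/‖h₃‖}. -/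
open Metric Set ENNReal

noncomputable section

abbrev E2 := EuclideanSpace ℝ (Fin 2)

/-- The (filled) triangle with labeled vertices `v 0, v 1, v 2`. -/
def Tri (v : Fin 3 → E2) : Set E2 := convexHull ℝ (Set.range v)

/-- `edgeLen v i` is the length of the edge opposite to vertex `i`. -/
def edgeLen (v : Fin 3 → E2) (i : Fin 3) : ℝ := dist (v (i + 1)) (v (i + 2))

/-- `altLen v i` is the length of the altitude from vertex `i`. -/
def altLen (v : Fin 3 → E2) (i : Fin 3) : ℝ :=
  Metric.infDist (v i) ((affineSpan ℝ ({v (i + 1), v (i + 2)} : Set E2) : Set E2))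

/-- `ang v i` is the interior angle at vertex `i`. -/
def ang (v : Fin 3 → E2) (i : Fin 3) : ℝ :=
  EuclideanGeometry.angle (v (i + 1)) (v i) (v (i + 2))

def IsAcute (v : Fin 3 → E2) : Prop := ∀ i, ang v i < Real.pi / 2

def IsNonObtuse (v : Fin 3 → E2) : Prop := ∀ i, ang v i ≤ Real.pi / 2

def triArea (v : Fin 3 → E2) : ℝ := edgeLen v 0 * altLen v 0 / 2

/-- `f` restricts to a label-preserving homeomorphism from the triangle on `v`
onto the triangle on `v'`. -/
def IsLabelHomeo (v v' : Fin 3 → E2) (f : E2 → E2) : Prop :=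
  ContinuousOn f (Tri v) ∧ Set.BijOn f (Tri v) (Tri v') ∧
  (∃ g : E2 → E2, ContinuousOn g (Tri v') ∧ Set.InvOn g f (Tri v) (Tri v')) ∧
  ∀ i, f (v i) = v' i

/-- The Lipschitz constant `L(f)` of `f` on the triangle on `v`,
`sup {dist (f x) (f y) / dist x y : x ≠ y}`, as a value in `ℝ≥0∞`. -/
def lipConst (v : Fin 3 → E2) (f : E2 → E2) : ℝ≥0∞ :=
  ⨆ x ∈ Tri v, ⨆ y ∈ Tri v, edist (f x) (f y) / edist x y

/-- `Λ(T,T')`: infimum of Lipschitz constants of label-preserving homeomorphisms. -/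
def Lam (v v' : Fin 3 → E2) : ℝ≥0∞ :=
  ⨅ (f : E2 → E2) (_ : IsLabelHomeo v v' f), lipConst v f

/-- `M(T,T')`: the max of the six ratios of edge lengths and altitude lengths. -/
def Mdist (v v' : Fin 3 → E2) : ℝ :=
  max (max (max (edgeLen v' 0 / edgeLen v 0) (edgeLen v' 1 / edgeLen v 1))
        (edgeLen v' 2 / edgeLen v 2))
      (max (max (altLen v' 0 / altLen v 0) (altLen v' 1 / altLen v 1))
        (altLen v' 2 / altLen v 2))

/-! ### Auxiliary lemmas -/

open scoped RealInnerProductSpace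

lemma fin3_facts : ∀ i : Fin 3, (i + 1) + 1 = i + 2 ∧ (i + 1) + 2 = i ∧
    (i + 2) + 1 = i ∧ (i + 2) + 2 = i + 1 ∧
    i + 1 ≠ i + 2 ∧ i + 1 ≠ i ∧ i + 2 ≠ i ∧ i + 2 ≠ i + 1 := by decide

lemma sum3 {M : Type*} [AddCommMonoid M] (i : Fin 3) (F : Fin 3 → M) :
    ∑ j, F j = F i + F (i + 1) + F (i + 2) := by
  have h := Fintype.sum_equiv (Equiv.addLeft i) (fun k => F (i + k)) F (fun k => by simp)
  rw [← h, Fin.sum_univ_three]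
  simp

lemma inner_pos_of_angle_lt {x y : E2} (hx : x ≠ 0) (hy : y ≠ 0)
    (h : InnerProductGeometry.angle x y < Real.pi / 2) :
    0 < ⟪x, y⟫ := by
  rw [← InnerProductGeometry.cos_angle_mul_norm_mul_norm]
  have h0 := InnerProductGeometry.angle_nonneg x y
  have hc : 0 < Real.cos (InnerProductGeometry.angle x y) :=
    Real.cos_pos_of_mem_Ioo ⟨by linarith [Real.pi_pos], h⟩
  exact mul_pos hc (mul_pos (norm_pos_iff.mpr hx) (norm_pos_iff.mpr hy))

lemma vmem_Tri (v : Fin 3 → E2) (j : Fin 3) : v j ∈ Tri v :=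
  subset_convexHull ℝ _ ⟨j, rfl⟩

lemma altLen_pos (v : Fin 3 → E2) (hv : AffineIndependent ℝ v) (i : Fin 3) :
    0 < altLen v i := by
  obtain ⟨-, -, -, -, -, h4, h5, -⟩ := fin3_facts i
  set S := affineSpan ℝ ({v (i + 1), v (i + 2)} : Set E2) with hS
  have hcl : IsClosed (S : Set E2) := S.closed_of_finiteDimensional
  have hne : (S : Set E2).Nonempty := ⟨v (i + 1), left_mem_affineSpan_pair ℝ _ _⟩
  have hnm : v i ∉ (S : Set E2) := by
    intro h
    have h2 : ({v (i + 1), v (i + 2)} : Set E2) ⊆ v '' (Set.univ \ {i}) := by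
      rintro x (rfl | rfl)
      · exact ⟨i + 1, ⟨trivial, h4⟩, rfl⟩
      · exact ⟨i + 2, ⟨trivial, h5⟩, rfl⟩
    exact hv.notMem_affineSpan_diff i Set.univ (affineSpan_mono ℝ h2 h)
  exact (hcl.notMem_iff_infDist_pos hne).1 hnm

lemma edgeLen_pos (v : Fin 3 → E2) (hv : AffineIndependent ℝ v) (i : Fin 3) :
    0 < edgeLen v i := by
  obtain ⟨-, -, -, -, h3, -, -, -⟩ := fin3_facts i
  exact dist_pos.2 fun h => h3 (hv.injective h)

lemma ratio_le_lipConst (v : Fin 3 → E2) (f : E2 → E2) {x y : E2} {A B : ℝ}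
    (hx : x ∈ Tri v) (hy : y ∈ Tri v) (hA : 0 < A)
    (h1 : dist x y ≤ A) (h2 : B ≤ dist (f x) (f y)) :
    ENNReal.ofReal (B / A) ≤ lipConst v f := by
  rw [ENNReal.ofReal_div_of_pos hA]
  have step : ENNReal.ofReal B / ENNReal.ofReal A ≤ edist (f x) (f y) / edist x y :=
    ENNReal.div_le_div (by rw [edist_dist]; exact ENNReal.ofReal_le_ofReal h2)
      (by rw [edist_dist]; exact ENNReal.ofReal_le_ofReal h1)
  refine step.trans ?_
  calc edist (f x) (f y) / edist x y
      ≤ ⨆ y' ∈ Tri v, edist (f x) (f y') / edist x y' :=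
        le_biSup (fun y' => edist (f x) (f y') / edist x y') hy
    _ ≤ lipConst v f :=
        le_biSup (fun x' => ⨆ y' ∈ Tri v, edist (f x') (f y') / edist x' y') hx

/-- The foot of the altitude from `v i` lies strictly inside the opposite edge,
and realizes the distance to the opposite line. -/
lemma foot_exists (v : Fin 3 → E2) (hv : AffineIndependent ℝ v) (hT : IsAcute v) (i : Fin 3) :
    ∃ t₀ : ℝ, 0 < t₀ ∧ t₀ < 1 ∧
      ‖(t₀ • (v (i + 2) - v (i + 1)) + v (i + 1)) - v i‖ = altLen v i := by
  obtain ⟨h1, h2, h2a, h2b, h3, h4, h5, h6⟩ := fin3_facts i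
  set p0 := v i with hp0
  set p1 := v (i + 1) with hp1
  set p2 := v (i + 2) with hp2
  have hne12 : p1 ≠ p2 := fun h => h3 (hv.injective h)
  have hne10 : p1 ≠ p0 := fun h => h4 (hv.injective h)
  have hne20 : p2 ≠ p0 := fun h => h5 (hv.injective h)
  set d := p2 - p1 with hd
  set u := p0 - p1 with hu
  have hdne : d ≠ 0 := sub_ne_zero_of_ne hne12.symm
  have hune : u ≠ 0 := sub_ne_zero_of_ne hne10.symm
  have hden : (0:ℝ) < ‖d‖ ^ 2 := by have := norm_pos_iff.mpr hdne; positivity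
  -- angle at p1 is acute
  have hang1 : 0 < ⟪d, u⟫ := by
    have ha := hT (i + 1)
    unfold ang at ha
    rw [h1, h2] at ha
    unfold EuclideanGeometry.angle at ha
    simp only [vsub_eq_sub] at ha
    exact inner_pos_of_angle_lt hdne hune ha
  -- angle at p2 is acute
  have hang2 : 0 < ⟪u, d⟫ - ‖d‖ ^ 2 + ‖d‖ ^ 2 - ⟪u, d⟫ + (‖d‖ ^ 2 - ⟪u, d⟫) := by
    have ha := hT (i + 2)
    unfold ang at ha
    rw [h2a, h2b] at ha
    unfold EuclideanGeometry.angle at ha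
    simp only [vsub_eq_sub] at ha
    have hne02 : v i - v (i + 2) ≠ 0 := sub_ne_zero_of_ne hne20.symm
    have hne12' : v (i + 1) - v (i + 2) ≠ 0 := sub_ne_zero_of_ne hne12
    have hpos := inner_pos_of_angle_lt hne02 hne12' ha
    have heq : ⟪v i - v (i + 2), v (i + 1) - v (i + 2)⟫ = ‖d‖ ^ 2 - ⟪u, d⟫ := by
      rw [show v i - v (i + 2) = u - d by rw [hu, hd]; abel,
        show v (i + 1) - v (i + 2) = -d by rw [hd]; abel]
      rw [inner_neg_right, inner_sub_left, real_inner_self_eq_norm_sq]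
      ring
    rw [heq] at hpos
    linarith
  have hlt : ⟪u, d⟫ < ‖d‖ ^ 2 := by linarith
  have hud : 0 < ⟪u, d⟫ := by rw [real_inner_comm]; exact hang1
  set t₀ : ℝ := ⟪u, d⟫ / ‖d‖ ^ 2 with ht₀
  refine ⟨t₀, div_pos hud hden, (div_lt_one hden).2 hlt, ?_⟩
  set F := t₀ • d + p1 with hF
  have hperp : ⟪p0 - F, d⟫ = 0 := by
    have hpf : p0 - F = u - t₀ • d := by rw [hF, hu]; abel
    rw [hpf, inner_sub_left, real_inner_smul_left, real_inner_self_eq_norm_sq, ht₀]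
    field_simp
    ring
  have hFmem : F ∈ (affineSpan ℝ ({p1, p2} : Set E2) : Set E2) := by
    have := smul_vsub_vadd_mem_affineSpan_pair t₀ p1 p2
    simpa [vsub_eq_sub, vadd_eq_add, hF, hd] using this
  show ‖F - p0‖ = altLen v i
  have hkey : ∀ q ∈ (affineSpan ℝ ({p1, p2} : Set E2) : Set E2), ‖F - p0‖ ≤ dist p0 q := by
    intro q hq
    rw [← vsub_vadd q p1] at hq
    obtain ⟨s, hs⟩ := vadd_left_mem_affineSpan_pair.1 hq
    rw [vsub_eq_sub, vsub_eq_sub] at hs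
    have hq2 : q = s • d + p1 := by rw [hd, hs]; abel
    have hq' : p0 - q = (p0 - F) + (t₀ - s) • d := by
      rw [hq2, hF]; module
    rw [dist_eq_norm, hq']
    have hinn0 : ⟪p0 - F, (t₀ - s) • d⟫ = 0 := by
      rw [real_inner_smul_right, hperp]; ring
    have hpyth := norm_add_sq_real (p0 - F) ((t₀ - s) • d)
    rw [hinn0] at hpyth
    have h01 : ‖F - p0‖ = ‖p0 - F‖ := norm_sub_rev _ _
    nlinarith [norm_nonneg ((p0 - F) + (t₀ - s) • d), norm_nonneg (p0 - F),
      sq_nonneg ‖(t₀ - s) • d‖]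
  unfold altLen
  rw [← hp1, ← hp2, ← hp0]
  refine le_antisymm ?_ ?_
  · apply le_of_not_gt
    intro hltd
    obtain ⟨q, hqS, hqd⟩ :=
      (infDist_lt_iff ⟨p1, left_mem_affineSpan_pair ℝ p1 p2⟩).1 hltd
    exact absurd hqd (not_lt.2 (hkey q hqS))
  · rw [norm_sub_rev, ← dist_eq_norm]
    exact infDist_le_dist_of_mem hFmem

lemma edge_key (v v' : Fin 3 → E2) (hv : AffineIndependent ℝ v)
    (f : E2 → E2) (hf : IsLabelHomeo v v' f) (i : Fin 3) :
    ENNReal.ofReal (edgeLen v' i / edgeLen v i) ≤ lipConst v f := by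
  obtain ⟨hfc, hbij, hg, hlab⟩ := hf
  refine ratio_le_lipConst v f (vmem_Tri v (i + 1)) (vmem_Tri v (i + 2))
    (edgeLen_pos v hv i) le_rfl ?_
  rw [hlab (i + 1), hlab (i + 2)]
  exact le_rfl

lemma alt_key (v v' : Fin 3 → E2) (hv : AffineIndependent ℝ v) (hv' : AffineIndependent ℝ v')
    (hT : IsAcute v) (f : E2 → E2) (hf : IsLabelHomeo v v' f) (i : Fin 3) :
    ENNReal.ofReal (altLen v' i / altLen v i) ≤ lipConst v f := by
  obtain ⟨hfc, hbij, ⟨g, hgc, hinv⟩, hlab⟩ := hf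
  have hgf : Set.LeftInvOn g f (Tri v) := hinv.1
  have hfg : Set.RightInvOn g f (Tri v') := hinv.2
  obtain ⟨h1f, h2f, h2af, h2bf, h3f, h4f, h5f, h6f⟩ := fin3_facts i
  obtain ⟨t₀, ht0, ht1, hFlen⟩ := foot_exists v hv hT i
  set F := t₀ • (v (i + 2) - v (i + 1)) + v (i + 1) with hFdef
  -- barycentric coordinates
  have htop : affineSpan ℝ (Set.range v) = ⊤ := by
    rw [hv.affineSpan_eq_top_iff_card_eq_finrank_add_one]
    simp [finrank_euclideanSpace_fin]
  let B : AffineBasis (Fin 3) ℝ E2 := ⟨v, hv, htop⟩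
  have hcoord_nn : ∀ j : Fin 3, ∀ p ∈ Tri v, 0 ≤ B.coord j p := by
    intro j p hp
    have hconv : Convex ℝ ((B.coord j) ⁻¹' (Set.Ici (0:ℝ))) :=
      (convex_Ici (0:ℝ)).affine_preimage _
    refine convexHull_min ?_ hconv hp
    rintro _ ⟨k, rfl⟩
    show (0:ℝ) ≤ B.coord j (v k)
    rw [show v k = B k from rfl, B.coord_apply]
    split <;> norm_num
  have hsumc : ∀ p : E2, B.coord i p + B.coord (i + 1) p + B.coord (i + 2) p = 1 := by
    intro p
    have := B.sum_coord_apply_eq_one p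
    rwa [sum3 i] at this
  have hdecomp : ∀ p : E2,
      p = B.coord i p • v i + B.coord (i + 1) p • v (i + 1) + B.coord (i + 2) p • v (i + 2) := by
    intro p
    have h1 := B.linear_combination_coord_eq_self p
    rw [sum3 i] at h1
    exact h1.symm
  have hcont : ∀ j : Fin 3, Continuous fun p => B.coord j p :=
    fun j => (B.coord j).continuous_of_finiteDimensional
  -- the image of the opposite edge of T' under g
  set eg : Set E2 := segment ℝ (v' (i + 1)) (v' (i + 2)) with heg
  have hegT : eg ⊆ Tri v' :=
    (convex_convexHull ℝ _).segment_subset (vmem_Tri v' (i + 1)) (vmem_Tri v' (i + 2))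
  have hCpre : IsPreconnected (g '' eg) :=
    ((convex_segment _ _).isPreconnected).image g (hgc.mono hegT)
  have hmem1 : v (i + 1) ∈ g '' eg :=
    ⟨v' (i + 1), left_mem_segment ℝ _ _, by rw [← hlab (i + 1)]; exact hgf (vmem_Tri v (i + 1))⟩
  have hmem2 : v (i + 2) ∈ g '' eg :=
    ⟨v' (i + 2), right_mem_segment ℝ _ _, by rw [← hlab (i + 2)]; exact hgf (vmem_Tri v (i + 2))⟩
  have hCT : g '' eg ⊆ Tri v := by
    rintro _ ⟨q, hq, rfl⟩
    obtain ⟨x, hx, rfl⟩ := hbij.surjOn (hegT hq)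
    rwa [hgf hx]
  -- intermediate value argument
  set φ : E2 → ℝ := fun p => (1 - t₀) * B.coord (i + 2) p - t₀ * B.coord (i + 1) p with hφdef
  have hφc : Continuous φ :=
    (continuous_const.mul (hcont (i + 2))).sub (continuous_const.mul (hcont (i + 1)))
  have hφ1 : φ (v (i + 1)) = -t₀ := by
    show (1 - t₀) * B.coord (i + 2) (B (i + 1)) - t₀ * B.coord (i + 1) (B (i + 1)) = -t₀
    rw [B.coord_apply, B.coord_apply, if_neg h6f, if_pos rfl]
    ring
  have hφ2 : φ (v (i + 2)) = 1 - t₀ := by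
    show (1 - t₀) * B.coord (i + 2) (B (i + 2)) - t₀ * B.coord (i + 1) (B (i + 2)) = 1 - t₀
    rw [B.coord_apply, B.coord_apply, if_pos rfl, if_neg h3f]
    ring
  have hIcc : (0:ℝ) ∈ Set.Icc (φ (v (i + 1))) (φ (v (i + 2))) := by
    rw [hφ1, hφ2]; exact ⟨by linarith, by linarith⟩
  obtain ⟨p, hpC, hφp⟩ := hCpre.intermediate_value hmem1 hmem2 hφc.continuousOn hIcc
  obtain ⟨q, hq, rfl⟩ := hpC
  have hpT : g q ∈ Tri v := hCT ⟨q, hq, rfl⟩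
  have hfgq : f (g q) = q := hfg (hegT hq)
  have hqspan : q ∈ (affineSpan ℝ ({v' (i + 1), v' (i + 2)} : Set E2) : Set E2) := by
    have hsub : eg ⊆ (affineSpan ℝ ({v' (i + 1), v' (i + 2)} : Set E2) : Set E2) := by
      rw [heg, ← convexHull_pair]
      exact convexHull_subset_affineSpan _
    exact hsub hq
  have hB : altLen v' i ≤ dist (f (v i)) (f (g q)) := by
    rw [hlab i, hfgq]
    exact infDist_le_dist_of_mem hqspan
  -- the distance bound dist (v i) (g q) ≤ altLen v i
  have ha := hcoord_nn i (g q) hpT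
  have hbb := hcoord_nn (i + 1) (g q) hpT
  have hcc := hcoord_nn (i + 2) (g q) hpT
  have hsum := hsumc (g q)
  set a := B.coord i (g q)
  set bb := B.coord (i + 1) (g q)
  set cc := B.coord (i + 2) (g q)
  have hφp' : (1 - t₀) * cc - t₀ * bb = 0 := hφp
  have hkey : (g q) - v i = bb • (v (i + 1) - v i) + cc • (v (i + 2) - v i) := by
    have hd := hdecomp (g q)
    have haeq : a = 1 - bb - cc := by linarith
    calc (g q) - v i = (a • v i + bb • v (i + 1) + cc • v (i + 2)) - v i := by rw [← hd]
      _ = _ := by rw [haeq]; module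
  have hbbc : bb = (bb + cc) * (1 - t₀) := by linear_combination -hφp'
  have hccc : cc = (bb + cc) * t₀ := by linear_combination hφp'
  have hFp : (g q) - v i = (bb + cc) • (F - v i) := by
    calc (g q) - v i = bb • (v (i + 1) - v i) + cc • (v (i + 2) - v i) := hkey
      _ = ((bb + cc) * (1 - t₀)) • (v (i + 1) - v i)
          + ((bb + cc) * t₀) • (v (i + 2) - v i) := by rw [← hbbc, ← hccc]
      _ = (bb + cc) • (F - v i) := by rw [hFdef]; module
  have hdistle : dist (v i) (g q) ≤ altLen v i := by
    rw [dist_eq_norm, norm_sub_rev, ← hFlen]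
    rw [show (t₀ • (v (i + 2) - v (i + 1)) + v (i + 1)) - v i = F - v i from rfl]
    rw [hFp, norm_smul, Real.norm_eq_abs, abs_of_nonneg (by linarith)]
    have hle1 : bb + cc ≤ 1 := by linarith
    calc (bb + cc) * ‖F - v i‖ ≤ 1 * ‖F - v i‖ :=
          mul_le_mul_of_nonneg_right hle1 (norm_nonneg _)
      _ = ‖F - v i‖ := one_mul _
  exact ratio_le_lipConst v f (vmem_Tri v i) hpT (altLen_pos v hv i) hdistle hB

theorem stmt0 (v v' : Fin 3 → E2)
    (hv : AffineIndependent ℝ v) (hv' : AffineIndependent ℝ v')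
    (hT : IsAcute v) (hT' : IsAcute v') :
    (∀ f : E2 → E2, IsLabelHomeo v v' f →
      ENNReal.ofReal (Mdist v v') ≤ lipConst v f) ∧
    ENNReal.ofReal (Mdist v v') ≤ Lam v v' := by
  have main : ∀ f : E2 → E2, IsLabelHomeo v v' f →
      ENNReal.ofReal (Mdist v v') ≤ lipConst v f := by
    intro f hf
    have hmono : Monotone ENNReal.ofReal := fun _ _ h => ENNReal.ofReal_le_ofReal h
    unfold Mdist
    rw [hmono.map_max, hmono.map_max, hmono.map_max, hmono.map_max, hmono.map_max]
    refine max_le (max_le (max_le ?_ ?_) ?_) (max_le (max_le ?_ ?_) ?_)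
    · exact edge_key v v' hv f hf 0
    · exact edge_key v v' hv f hf 1
    · exact edge_key v v' hv f hf 2
    · exact alt_key v v' hv hv' hT f hf 0
    · exact alt_key v v' hv hv' hT f hf 1
    · exact alt_key v v' hv hv' hT f hf 2
  exact ⟨main, le_iInf fun f => le_iInf fun hf => main f hf⟩

end
end

section
/- Let T and T' be labeled triangles in the Euclidean plane whose angles at the vertex labeled 1 satisfy θ₁ = θ'₁ = π/2 (right triangles with right angle at v₁ and v'₁). Then Λ(T,T') = max{‖e'₂‖/‖e₂‖, ‖e'₃‖/‖e₃‖}, and this infimum is attained: there exists a label-preserving homeomorphism f : T → T' with L(f) = max{‖e'₂‖/‖e₂‖, ‖e'₃‖/‖e₃‖}. -/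
open Metric Set ENNReal

noncomputable section

open RealInnerProductSpace

/-- The right-angle linear map sending `u1 ↦ w1`, `u2 ↦ w2`. -/
def rlin (u1 u2 w1 w2 : E2) : E2 →L[ℝ] E2 :=
  (‖u1‖ ^ 2)⁻¹ • (innerSL ℝ u1).smulRight w1 + (‖u2‖ ^ 2)⁻¹ • (innerSL ℝ u2).smulRight w2

lemma rlin_apply (u1 u2 w1 w2 z : E2) :
    rlin u1 u2 w1 w2 z = (⟪u1, z⟫ / ‖u1‖ ^ 2) • w1 + (⟪u2, z⟫ / ‖u2‖ ^ 2) • w2 := by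
  simp [rlin, smul_smul, div_eq_inv_mul]

lemma rlin_eval1 (u1 u2 w1 w2 : E2) (h1 : u1 ≠ 0) (hp : ⟪u1, u2⟫ = 0) :
    rlin u1 u2 w1 w2 u1 = w1 := by
  have hp' : ⟪u2, u1⟫ = 0 := by rw [real_inner_comm]; exact hp
  rw [rlin_apply, real_inner_self_eq_norm_sq, hp',
    div_self (pow_ne_zero _ (norm_ne_zero_iff.2 h1)), one_smul, zero_div, zero_smul, add_zero]

lemma rlin_eval2 (u1 u2 w1 w2 : E2) (h2 : u2 ≠ 0) (hp : ⟪u1, u2⟫ = 0) :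
    rlin u1 u2 w1 w2 u2 = w2 := by
  rw [rlin_apply, real_inner_self_eq_norm_sq, hp,
    div_self (pow_ne_zero _ (norm_ne_zero_iff.2 h2)), one_smul, zero_div, zero_smul, zero_add]

lemma expand2 (u1 u2 : E2) (h1 : u1 ≠ 0) (h2 : u2 ≠ 0) (hp : ⟪u1, u2⟫ = 0) (z : E2) :
    (⟪u1, z⟫ / ‖u1‖ ^ 2) • u1 + (⟪u2, z⟫ / ‖u2‖ ^ 2) • u2 = z := by
  have hp' : ⟪u2, u1⟫ = 0 := by rw [real_inner_comm]; exact hp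
  have n1 : ‖u1‖ ^ 2 ≠ 0 := pow_ne_zero _ (norm_ne_zero_iff.2 h1)
  have n2 : ‖u2‖ ^ 2 ≠ 0 := pow_ne_zero _ (norm_ne_zero_iff.2 h2)
  have hli : LinearIndependent ℝ ![u1, u2] := by
    rw [LinearIndependent.pair_iff]
    intro a b hab
    have e1 : ⟪u1, a • u1 + b • u2⟫ = 0 := by rw [hab, inner_zero_right]
    have e2 : ⟪u2, a • u1 + b • u2⟫ = 0 := by rw [hab, inner_zero_right]
    rw [inner_add_right, real_inner_smul_right, real_inner_smul_right, hp,
      real_inner_self_eq_norm_sq, mul_zero, add_zero, mul_eq_zero] at e1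
    rw [inner_add_right, real_inner_smul_right, real_inner_smul_right, hp',
      real_inner_self_eq_norm_sq, mul_zero, zero_add, mul_eq_zero] at e2
    exact ⟨e1.resolve_right n1, e2.resolve_right n2⟩
  have hspan : Submodule.span ℝ (Set.range ![u1, u2]) = ⊤ :=
    hli.span_eq_top_of_card_eq_finrank (by simp)
  set w := z - ((⟪u1, z⟫ / ‖u1‖ ^ 2) • u1 + (⟪u2, z⟫ / ‖u2‖ ^ 2) • u2) with hw
  have hw1 : ⟪u1, w⟫ = 0 := by
    rw [hw, inner_sub_right, inner_add_right, real_inner_smul_right, real_inner_smul_right,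
      hp, real_inner_self_eq_norm_sq, mul_zero, add_zero, div_mul_cancel₀ _ n1, sub_self]
  have hw2 : ⟪u2, w⟫ = 0 := by
    rw [hw, inner_sub_right, inner_add_right, real_inner_smul_right, real_inner_smul_right,
      hp', real_inner_self_eq_norm_sq, mul_zero, zero_add, div_mul_cancel₀ _ n2, sub_self]
  have hwmem : w ∈ Submodule.span ℝ (Set.range ![u1, u2]) := hspan ▸ Submodule.mem_top
  rw [show Set.range ![u1, u2] = {u1, u2} by simp [Matrix.range_cons, Matrix.range_empty]; exact Set.pair_comm u2 u1] at hwmem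
  rw [Submodule.mem_span_pair] at hwmem
  obtain ⟨a, b, hab⟩ := hwmem
  have h0 : ⟪w, w⟫ = 0 := by
    nth_rewrite 1 [← hab]
    rw [inner_add_left, real_inner_smul_left, real_inner_smul_left, hw1, hw2, mul_zero,
      mul_zero, add_zero]
  have : w = 0 := by rwa [inner_self_eq_zero] at h0
  rw [hw] at this
  exact (sub_eq_zero.mp this).symm

lemma rlin_inv (u1 u2 w1 w2 : E2) (h1 : u1 ≠ 0) (h2 : u2 ≠ 0) (k1 : w1 ≠ 0) (k2 : w2 ≠ 0)
    (hp : ⟪u1, u2⟫ = 0) (hq : ⟪w1, w2⟫ = 0) (z : E2) :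
    rlin w1 w2 u1 u2 (rlin u1 u2 w1 w2 z) = z := by
  rw [rlin_apply u1 u2 w1 w2 z, map_add, map_smul, map_smul,
    rlin_eval1 w1 w2 u1 u2 k1 hq, rlin_eval2 w1 w2 u1 u2 k2 hq]
  exact expand2 u1 u2 h1 h2 hp z

lemma rlin_norm_le (u1 u2 w1 w2 : E2) (h1 : u1 ≠ 0) (h2 : u2 ≠ 0)
    (hp : ⟪u1, u2⟫ = 0) (hq : ⟪w1, w2⟫ = 0) (z : E2) :
    ‖rlin u1 u2 w1 w2 z‖ ≤ max (‖w1‖ / ‖u1‖) (‖w2‖ / ‖u2‖) * ‖z‖ := by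
  set M := max (‖w1‖ / ‖u1‖) (‖w2‖ / ‖u2‖) with hM
  have hn1 : (0:ℝ) < ‖u1‖ := norm_pos_iff.2 h1
  have hn2 : (0:ℝ) < ‖u2‖ := norm_pos_iff.2 h2
  have hM0 : 0 ≤ M := le_trans (div_nonneg (norm_nonneg _) (norm_nonneg _)) (le_max_left _ _)
  have hw1 : ‖w1‖ ≤ M * ‖u1‖ := by
    rw [← div_le_iff₀ hn1]; exact le_max_left _ _
  have hw2 : ‖w2‖ ≤ M * ‖u2‖ := by
    rw [← div_le_iff₀ hn2]; exact le_max_right _ _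
  set a := ⟪u1, z⟫ / ‖u1‖ ^ 2 with ha
  set b := ⟪u2, z⟫ / ‖u2‖ ^ 2 with hb
  have hz : a • u1 + b • u2 = z := expand2 u1 u2 h1 h2 hp z
  have hp' : ⟪u2, u1⟫ = 0 := by rw [real_inner_comm]; exact hp
  have hq' : ⟪w2, w1⟫ = 0 := by rw [real_inner_comm]; exact hq
  have hnz : ‖z‖ ^ 2 = a ^ 2 * ‖u1‖ ^ 2 + b ^ 2 * ‖u2‖ ^ 2 := by
    rw [← hz, ← real_inner_self_eq_norm_sq]
    simp only [inner_add_left, inner_add_right, real_inner_smul_left, real_inner_smul_right,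
      hp, hp', real_inner_self_eq_norm_sq, norm_smul, mul_pow, sq_abs, Real.norm_eq_abs]
    ring
  have hnA : ‖rlin u1 u2 w1 w2 z‖ ^ 2 = a ^ 2 * ‖w1‖ ^ 2 + b ^ 2 * ‖w2‖ ^ 2 := by
    rw [rlin_apply, ← ha, ← hb, ← real_inner_self_eq_norm_sq]
    simp only [inner_add_left, inner_add_right, real_inner_smul_left, real_inner_smul_right,
      hq, hq', real_inner_self_eq_norm_sq, norm_smul, mul_pow, sq_abs, Real.norm_eq_abs]
    ring
  have key : ‖rlin u1 u2 w1 w2 z‖ ^ 2 ≤ (M * ‖z‖) ^ 2 := by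
    rw [hnA, mul_pow, hnz]
    have e1 : a ^ 2 * ‖w1‖ ^ 2 ≤ a ^ 2 * (M * ‖u1‖) ^ 2 := by
      apply mul_le_mul_of_nonneg_left _ (sq_nonneg a)
      exact pow_le_pow_left₀ (norm_nonneg _) hw1 2
    have e2 : b ^ 2 * ‖w2‖ ^ 2 ≤ b ^ 2 * (M * ‖u2‖) ^ 2 := by
      apply mul_le_mul_of_nonneg_left _ (sq_nonneg b)
      exact pow_le_pow_left₀ (norm_nonneg _) hw2 2
    nlinarith [e1, e2]
  have h := Real.sqrt_le_sqrt key
  rwa [Real.sqrt_sq (norm_nonneg _), Real.sqrt_sq (mul_nonneg hM0 (norm_nonneg _))] at h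


lemma pair_le_lipConst (v : Fin 3 → E2) (f : E2 → E2) {x y : E2}
    (hx : x ∈ Tri v) (hy : y ∈ Tri v) :
    edist (f x) (f y) / edist x y ≤ lipConst v f :=
  le_iSup₂_of_le x hx (le_iSup₂_of_le y hy le_rfl)

lemma lower_bound (v v' : Fin 3 → E2) (hv : Function.Injective v) (f : E2 → E2)
    (hf : ∀ i, f (v i) = v' i) :
    ENNReal.ofReal (max (edgeLen v' 1 / edgeLen v 1) (edgeLen v' 2 / edgeLen v 2))
      ≤ lipConst v f := by
  have hmem : ∀ i, v i ∈ Tri v := fun i => subset_convexHull ℝ _ (mem_range_self i)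
  have hmono : Monotone ENNReal.ofReal := fun a b h => ENNReal.ofReal_le_ofReal h
  rw [hmono.map_max]
  have key : ∀ i j : Fin 3, v i ≠ v j →
      ENNReal.ofReal (dist (v' i) (v' j) / dist (v i) (v j)) ≤ lipConst v f := by
    intro i j hne
    have h := pair_le_lipConst v f (hmem i) (hmem j)
    rw [hf i, hf j, edist_dist, edist_dist,
      ← ENNReal.ofReal_div_of_pos (dist_pos.2 hne)] at h
    exact h
  refine max_le ?_ ?_
  · exact key 2 0 (hv.ne (by decide))
  · exact key 0 1 (hv.ne (by decide))

theorem stmt1 (v v' : Fin 3 → E2)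
    (hv : AffineIndependent ℝ v) (hv' : AffineIndependent ℝ v')
    (hright : ang v 0 = Real.pi / 2) (hright' : ang v' 0 = Real.pi / 2) :
    Lam v v' =
      ENNReal.ofReal (max (edgeLen v' 1 / edgeLen v 1) (edgeLen v' 2 / edgeLen v 2)) ∧
    ∃ f : E2 → E2, IsLabelHomeo v v' f ∧
      lipConst v f =
        ENNReal.ofReal (max (edgeLen v' 1 / edgeLen v 1) (edgeLen v' 2 / edgeLen v 2)) := by
  classical
  have hperp : ⟪v 1 - v 0, v 2 - v 0⟫ = 0 := by
    rw [InnerProductGeometry.inner_eq_zero_iff_angle_eq_pi_div_two]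
    exact hright
  have hperp' : ⟪v' 1 - v' 0, v' 2 - v' 0⟫ = 0 := by
    rw [InnerProductGeometry.inner_eq_zero_iff_angle_eq_pi_div_two]
    exact hright'
  set u1 := v 1 - v 0 with hu1d
  set u2 := v 2 - v 0 with hu2d
  set w1 := v' 1 - v' 0 with hw1d
  set w2 := v' 2 - v' 0 with hw2d
  have hu1 : u1 ≠ 0 := sub_ne_zero.2 (hv.injective.ne (by decide))
  have hu2 : u2 ≠ 0 := sub_ne_zero.2 (hv.injective.ne (by decide))
  have hw1 : w1 ≠ 0 := sub_ne_zero.2 (hv'.injective.ne (by decide))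
  have hw2 : w2 ≠ 0 := sub_ne_zero.2 (hv'.injective.ne (by decide))
  set L := rlin u1 u2 w1 w2 with hL
  set L' := rlin w1 w2 u1 u2 with hL'
  set f : E2 → E2 := fun x => v' 0 + L (x - v 0) with hf
  set g : E2 → E2 := fun y => v 0 + L' (y - v' 0) with hg
  have gf : ∀ x, g (f x) = x := by
    intro x
    show v 0 + L' ((v' 0 + L (x - v 0)) - v' 0) = x
    rw [add_sub_cancel_left, rlin_inv u1 u2 w1 w2 hu1 hu2 hw1 hw2 hperp hperp',
      add_sub_cancel]
  have fg : ∀ y, f (g y) = y := by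
    intro y
    show v' 0 + L ((v 0 + L' (y - v' 0)) - v 0) = y
    rw [add_sub_cancel_left, rlin_inv w1 w2 u1 u2 hw1 hw2 hu1 hu2 hperp' hperp,
      add_sub_cancel]
  have hfv : ∀ i, f (v i) = v' i := by
    intro i
    fin_cases i
    · show v' 0 + L (v 0 - v 0) = v' 0
      rw [sub_self, map_zero, add_zero]
    · show v' 0 + L (v 1 - v 0) = v' 1
      rw [← hu1d, hL, rlin_eval1 u1 u2 w1 w2 hu1 hperp, hw1d, add_sub_cancel]
    · show v' 0 + L (v 2 - v 0) = v' 2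
      rw [← hu2d, hL, rlin_eval2 u1 u2 w1 w2 hu2 hperp, hw2d, add_sub_cancel]
  have hfc : Continuous f :=
    continuous_const.add (L.continuous.comp (continuous_id.sub continuous_const))
  have hgc : Continuous g :=
    continuous_const.add (L'.continuous.comp (continuous_id.sub continuous_const))
  -- the affine map version of f
  have haff : ∀ x : E2, f x = L.toLinearMap (x -ᵥ v 0) +ᵥ f (v 0) := by
    intro x
    show v' 0 + L (x - v 0) = L (x - v 0) + (v' 0 + L (v 0 - v 0))
    rw [sub_self, map_zero, add_zero, add_comm]
  have himage : f '' Tri v = Tri v' := by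
    have h1 : f '' Tri v = (AffineMap.mk' f L.toLinearMap (v 0) haff) '' (convexHull ℝ (Set.range v)) := rfl
    rw [h1, AffineMap.image_convexHull]
    have h2 : (AffineMap.mk' f L.toLinearMap (v 0) haff) '' (Set.range v) = Set.range v' := by
      rw [← Set.range_comp]
      exact congrArg Set.range (funext fun i => hfv i)
    rw [h2]
    rfl
  have hInj : Function.Injective f := fun x y h => by rw [← gf x, ← gf y, h]
  have hhomeo : IsLabelHomeo v v' f := by
    refine ⟨hfc.continuousOn, ?_, ⟨g, hgc.continuousOn, fun x _ => gf x, fun y _ => fg y⟩, hfv⟩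
    rw [← himage]
    exact (hInj.injOn).bijOn_image
  -- edge lengths
  have hE1 : edgeLen v 1 = ‖u2‖ := by
    show dist (v 2) (v 0) = _
    rw [dist_eq_norm, hu2d]
  have hE2 : edgeLen v 2 = ‖u1‖ := by
    show dist (v 0) (v 1) = _
    rw [dist_comm, dist_eq_norm, hu1d]
  have hE1' : edgeLen v' 1 = ‖w2‖ := by
    show dist (v' 2) (v' 0) = _
    rw [dist_eq_norm, hw2d]
  have hE2' : edgeLen v' 2 = ‖w1‖ := by
    show dist (v' 0) (v' 1) = _
    rw [dist_comm, dist_eq_norm, hw1d]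
  set M : ℝ := max (edgeLen v' 1 / edgeLen v 1) (edgeLen v' 2 / edgeLen v 2) with hM
  have hMeq : M = max (‖w1‖ / ‖u1‖) (‖w2‖ / ‖u2‖) := by
    rw [hM, hE1, hE2, hE1', hE2', max_comm]
  have hM0 : 0 ≤ M := by
    rw [hMeq]
    exact le_trans (div_nonneg (norm_nonneg _) (norm_nonneg _)) (le_max_left _ _)
  -- Lipschitz bound
  have hlip : ∀ x y : E2, dist (f x) (f y) ≤ M * dist x y := by
    intro x y
    have hsub : f x - f y = L (x - y) := by
      show (v' 0 + L (x - v 0)) - (v' 0 + L (y - v 0)) = _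
      rw [add_sub_add_left_eq_sub, ← map_sub, sub_sub_sub_cancel_right]
    rw [dist_eq_norm, dist_eq_norm, hsub, hMeq]
    exact rlin_norm_le u1 u2 w1 w2 hu1 hu2 hperp hperp' (x - y)
  have hub : lipConst v f ≤ ENNReal.ofReal M := by
    refine iSup₂_le fun x _ => iSup₂_le fun y _ => ENNReal.div_le_of_le_mul ?_
    rw [edist_dist, edist_dist, ← ENNReal.ofReal_mul hM0]
    exact ENNReal.ofReal_le_ofReal (hlip x y)
  have hlb : ENNReal.ofReal M ≤ lipConst v f := lower_bound v v' hv.injective f hfv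
  have hlc : lipConst v f = ENNReal.ofReal M := le_antisymm hub hlb
  constructor
  · refine le_antisymm ?_ ?_
    · exact le_trans (iInf₂_le f hhomeo) hlc.le
    · exact le_iInf₂ fun g' hg' => lower_bound v v' hv.injective g' hg'.2.2.2
  · exact ⟨f, hhomeo, hlc⟩
end
end

section
/- Let T and T' be two acute labeled triangles in the Euclidean plane such that θ₂ ≤ θ'₂, θ₃ ≤ θ'₃, and ‖h₁‖ = ‖h'₁‖ (equal altitude lengths from the vertex labeled 1). Then Λ(T,T') = 1, and there exists a label-preserving homeomorphism f : T → T' with L(f) = 1. -/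
open Metric Set ENNReal

noncomputable section
set_option maxHeartbeats 1000000

open RealInnerProductSpace

section Helpers
variable {u w : E2}

lemma coord_u (hu : ‖u‖ = 1) (huw : ⟪u, w⟫ = 0) (a b : ℝ) : ⟪a • u + b • w, u⟫ = a := by
  have hui : ⟪u, u⟫ = 1 := by rw [real_inner_self_eq_norm_sq, hu]; norm_num
  have hwu : ⟪w, u⟫ = 0 := by rw [real_inner_comm]; exact huw
  rw [inner_add_left, real_inner_smul_left, real_inner_smul_left, hui, hwu]; ring

lemma coord_w (hw : ‖w‖ = 1) (huw : ⟪u, w⟫ = 0) (a b : ℝ) : ⟪a • u + b • w, w⟫ = b := by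
  have hwi : ⟪w, w⟫ = 1 := by rw [real_inner_self_eq_norm_sq, hw]; norm_num
  rw [inner_add_left, real_inner_smul_left, real_inner_smul_left, huw, hwi]; ring

lemma norm_sq_ortho (hu : ‖u‖ = 1) (hw : ‖w‖ = 1) (huw : ⟪u, w⟫ = 0) (a b : ℝ) :
    ‖a • u + b • w‖ ^ 2 = a ^ 2 + b ^ 2 := by
  rw [norm_add_sq_real, real_inner_smul_left, real_inner_smul_right, huw, norm_smul, norm_smul,
    hu, hw]
  simp only [mul_zero, zero_mul, add_zero, mul_one, Real.norm_eq_abs]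
  rw [sq_abs, sq_abs]


lemma norm_ortho (hu : ‖u‖ = 1) (hw : ‖w‖ = 1) (huw : ⟪u, w⟫ = 0) (a b : ℝ) :
    ‖a • u + b • w‖ = Real.sqrt (a ^ 2 + b ^ 2) := by
  rw [← norm_sq_ortho hu hw huw a b, Real.sqrt_sq (norm_nonneg _)]

end Helpers


/-- piecewise linear map on ℝ with slopes `lam` on `[0,∞)` and `mu` on `(-∞,0]`. -/
def pwl (lam mu s : ℝ) : ℝ := lam * max s 0 + mu * min s 0

lemma pwl_nonneg_case (lam mu s : ℝ) (hs : 0 ≤ s) : pwl lam mu s = lam * s := by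
  simp [pwl, max_eq_left hs, min_eq_right hs]

lemma pwl_nonpos_case (lam mu s : ℝ) (hs : s ≤ 0) : pwl lam mu s = mu * s := by
  simp [pwl, max_eq_right hs, min_eq_left hs]

lemma pwl_lip {lam mu : ℝ} (hl0 : 0 < lam) (hl1 : lam ≤ 1) (hm0 : 0 < mu) (hm1 : mu ≤ 1)
    (s t : ℝ) : |pwl lam mu s - pwl lam mu t| ≤ |s - t| := by
  unfold pwl
  rcases le_total s t with h | h
  · rw [abs_sub_comm, abs_sub_comm s t]
    have h1 : max s 0 ≤ max t 0 := max_le_max h le_rfl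
    have h2 : min s 0 ≤ min t 0 := min_le_min h le_rfl
    have key : max t 0 - max s 0 + (min t 0 - min s 0) = t - s := by
      rcases le_total s 0 with hs | hs <;> rcases le_total t 0 with ht | ht <;>
        simp [max_eq_left, max_eq_right, min_eq_left, min_eq_right, hs, ht] <;> linarith
    rw [abs_of_nonneg (by nlinarith), abs_of_nonneg (by linarith)]
    nlinarith
  · have h1 : max t 0 ≤ max s 0 := max_le_max h le_rfl
    have h2 : min t 0 ≤ min s 0 := min_le_min h le_rfl
    have key : max s 0 - max t 0 + (min s 0 - min t 0) = s - t := by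
      rcases le_total s 0 with hs | hs <;> rcases le_total t 0 with ht | ht <;>
        simp [max_eq_left, max_eq_right, min_eq_left, min_eq_right, hs, ht] <;> linarith
    rw [abs_of_nonneg (by nlinarith), abs_of_nonneg (by linarith)]
    nlinarith

lemma pwl_inv {lam mu : ℝ} (hl0 : 0 < lam) (hm0 : 0 < mu) (s : ℝ) :
    pwl lam⁻¹ mu⁻¹ (pwl lam mu s) = s := by
  rcases le_total s 0 with hs | hs
  · rw [pwl_nonpos_case _ _ _ hs, pwl_nonpos_case _ _ _ (by nlinarith), ← mul_assoc,
      inv_mul_cancel₀ hm0.ne', one_mul]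
  · rw [pwl_nonneg_case _ _ _ hs, pwl_nonneg_case _ _ _ (by positivity), ← mul_assoc,
      inv_mul_cancel₀ hl0.ne', one_mul]

lemma pwl_le {lam mu M : ℝ} (hl0 : 0 < lam) (hm0 : 0 < mu) (hM : 0 ≤ M) {s : ℝ} (hs : s ≤ M) :
    pwl lam mu s ≤ lam * M := by
  unfold pwl
  have h1 : max s 0 ≤ M := max_le hs hM
  have h2 : min s 0 ≤ 0 := min_le_right _ _
  nlinarith [max_le_max (le_refl s) (le_refl (0:ℝ))]

lemma pwl_ge {lam mu N : ℝ} (hl0 : 0 < lam) (hm0 : 0 < mu) (hN : 0 ≤ N) {s : ℝ} (hs : -N ≤ s) :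
    -(mu * N) ≤ pwl lam mu s := by
  unfold pwl
  have h1 : -N ≤ min s 0 := le_min hs (by linarith)
  have h2 : 0 ≤ max s 0 := le_max_right _ _
  nlinarith

lemma pwl_mono {lam mu : ℝ} (hl0 : 0 < lam) (hm0 : 0 < mu) : StrictMono (pwl lam mu) := by
  intro s t h
  rcases le_total s 0 with hs | hs <;> rcases le_total t 0 with ht | ht
  · rw [pwl_nonpos_case _ _ _ hs, pwl_nonpos_case _ _ _ ht]; nlinarith
  · rw [pwl_nonpos_case _ _ _ hs, pwl_nonneg_case _ _ _ ht]
    rcases hs.lt_or_eq with hs' | hs'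
    · nlinarith
    · subst hs'; nlinarith
  · linarith
  · rw [pwl_nonneg_case _ _ _ hs, pwl_nonneg_case _ _ _ ht]; nlinarith

lemma pwl_continuous (lam mu : ℝ) : Continuous (pwl lam mu) := by
  unfold pwl; fun_prop


lemma ortho_decomp {u w : E2} (hu : ‖u‖ = 1) (hw : ‖w‖ = 1) (huw : ⟪u, w⟫ = 0) (z : E2) :
    z = ⟪z, u⟫ • u + ⟪z, w⟫ • w := by
  have hli : LinearIndependent ℝ ![u, w] := by
    rw [LinearIndependent.pair_iff]
    intro a b hab
    have h1 : ⟪a • u + b • w, u⟫ = 0 := by rw [hab]; simp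
    have h2 : ⟪a • u + b • w, w⟫ = 0 := by rw [hab]; simp
    have hui : ⟪u, u⟫ = 1 := by rw [real_inner_self_eq_norm_sq, hu]; norm_num
    have hwi : ⟪w, w⟫ = 1 := by rw [real_inner_self_eq_norm_sq, hw]; norm_num
    have hwu : ⟪w, u⟫ = 0 := by rw [real_inner_comm]; exact huw
    rw [inner_add_left, real_inner_smul_left, real_inner_smul_left, hui, hwu] at h1
    rw [inner_add_left, real_inner_smul_left, real_inner_smul_left, huw, hwi] at h2
    constructor <;> linarith
  have hspan : Submodule.span ℝ ({u, w} : Set E2) = ⊤ := by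
    have hr : Set.range ![u, w] = {u, w} := by
      simp [Matrix.range_cons, Matrix.range_empty, Set.pair_comm]
    have := hli.span_eq_top_of_card_eq_finrank (by simp)
    rwa [hr] at this
  have hz : z ∈ Submodule.span ℝ ({u, w} : Set E2) := hspan ▸ Submodule.mem_top
  obtain ⟨a, b, hab⟩ := Submodule.mem_span_pair.mp hz
  have hui : ⟪u, u⟫ = 1 := by rw [real_inner_self_eq_norm_sq, hu]; norm_num
  have hwi : ⟪w, w⟫ = 1 := by rw [real_inner_self_eq_norm_sq, hw]; norm_num
  have hwu : ⟪w, u⟫ = 0 := by rw [real_inner_comm]; exact huw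
  have h1 : ⟪z, u⟫ = a := by
    rw [← hab, inner_add_left, real_inner_smul_left, real_inner_smul_left, hui, hwu]; ring
  have h2 : ⟪z, w⟫ = b := by
    rw [← hab, inner_add_left, real_inner_smul_left, real_inner_smul_left, huw, hwi]; ring
  rw [h1, h2, hab]

structure TriSetup (v : Fin 3 → E2) (F u w : E2) (p q h : ℝ) : Prop where
  hu : ‖u‖ = 1
  hw : ‖w‖ = 1
  huw : ⟪u, w⟫ = 0
  hv0 : v 0 = F + h • w
  hv1 : v 1 = F - q • u
  hv2 : v 2 = F + p • u
  hp : 0 < p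
  hq : 0 < q
  hh : 0 < h

lemma mem_tri_iff {v : Fin 3 → E2} {x : E2} :
    x ∈ Tri v ↔ ∃ a : Fin 3 → ℝ, (∀ i, 0 ≤ a i) ∧ a 0 + a 1 + a 2 = 1 ∧
      x = a 0 • v 0 + a 1 • v 1 + a 2 • v 2 := by
  constructor
  · intro hx
    rw [Tri, convexHull_range_eq_exists_affineCombination] at hx
    obtain ⟨s, wt, hw0, hw1, hx⟩ := hx
    refine ⟨fun i => if i ∈ s then wt i else 0, fun i => ?_, ?_, ?_⟩
    · dsimp only; split
      · exact hw0 _ ‹_›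
      · exact le_rfl
    · show (if (0:Fin 3) ∈ s then wt 0 else 0) + _ + _ = 1
      have : ∑ i, (if i ∈ s then wt i else 0) = 1 := by
        rw [Finset.sum_ite_mem, Finset.univ_inter, hw1]
      rw [← Fin.sum_univ_three (fun i => if i ∈ s then wt i else 0)]
      exact this
    · show x = (if (0:Fin 3) ∈ s then wt 0 else 0) • v 0 + _ + _
      rw [← hx, Finset.affineCombination_eq_linear_combination s v wt hw1]
      have : ∑ i, (if i ∈ s then wt i else 0) • v i = ∑ i ∈ s, wt i • v i := by
        rw [Finset.sum_congr rfl (g := fun i => if i ∈ s then wt i • v i else 0)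
          (fun i _ => by split <;> simp [*]), Finset.sum_ite_mem, Finset.univ_inter]
      rw [← Fin.sum_univ_three (fun i => (if i ∈ s then wt i else 0) • v i), this]
  · rintro ⟨a, ha0, ha1, rfl⟩
    exact mem_convexHull_of_exists_fintype a v ha0
      (by rw [Fin.sum_univ_three]; exact ha1) (fun i => Set.mem_range_self i)
      (by rw [Fin.sum_univ_three])

lemma TriSetup.coords {v : Fin 3 → E2} {F u w : E2} {p q h : ℝ}
    (S : TriSetup v F u w p q h) {x : E2} (hx : x ∈ Tri v) :
    ∃ a : Fin 3 → ℝ, (∀ i, 0 ≤ a i) ∧ a 0 + a 1 + a 2 = 1 ∧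
      ⟪x - F, u⟫ = a 2 * p - a 1 * q ∧ ⟪x - F, w⟫ = a 0 * h := by
  obtain ⟨a, h0, h1, hx⟩ := mem_tri_iff.mp hx
  have hxF : x - F = (a 2 * p - a 1 * q) • u + (a 0 * h) • w := by
    rw [hx, S.hv0, S.hv1, S.hv2]
    match_scalars <;> linarith
  refine ⟨a, h0, h1, ?_, ?_⟩
  · rw [hxF, coord_u S.hu S.huw]
  · rw [hxF, coord_w S.hw S.huw]

open InnerProductGeometry in
lemma angle_aux {u w : E2} (hu : ‖u‖ = 1) (hw : ‖w‖ = 1) (huw : ⟪u, w⟫ = 0)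
    {d a h : ℝ} (hd : 0 < d) (hh : 0 < h) :
    Real.cos (angle (d • u) (a • u + h • w)) = a / Real.sqrt (a ^ 2 + h ^ 2) ∧
    Real.sin (angle (d • u) (a • u + h • w)) = h / Real.sqrt (a ^ 2 + h ^ 2) := by
  have hc : ‖a • u + h • w‖ = Real.sqrt (a ^ 2 + h ^ 2) := norm_ortho hu hw huw a h
  have hcpos : 0 < Real.sqrt (a ^ 2 + h ^ 2) := Real.sqrt_pos.mpr (by positivity)
  have hinner : ⟪d • u, a • u + h • w⟫ = d * a := by
    rw [real_inner_smul_left, inner_add_right, real_inner_smul_right, real_inner_smul_right,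
      real_inner_self_eq_norm_sq, hu, huw]; ring
  have hnd : ‖d • u‖ = d := by rw [norm_smul, hu, Real.norm_eq_abs, abs_of_pos hd, mul_one]
  have harg : ⟪d • u, a • u + h • w⟫ / (‖d • u‖ * ‖a • u + h • w‖) =
      a / Real.sqrt (a ^ 2 + h ^ 2) := by
    rw [hinner, hnd, hc]; field_simp
  constructor
  · rw [cos_angle, harg]
  · rw [angle, harg, Real.sin_arccos]
    have h1 : 1 - (a / Real.sqrt (a ^ 2 + h ^ 2)) ^ 2 = (h / Real.sqrt (a ^ 2 + h ^ 2)) ^ 2 := by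
      rw [div_pow, div_pow, Real.sq_sqrt (by positivity)]
      field_simp; ring
    rw [h1, Real.sqrt_sq (by positivity)]

open InnerProductGeometry in
lemma exists_triSetup {v : Fin 3 → E2} (hv : AffineIndependent ℝ v)
    (ha1 : ang v 1 < Real.pi / 2) (ha2 : ang v 2 < Real.pi / 2) :
    ∃ F u w p q h, TriSetup v F u w p q h ∧ altLen v 0 = h ∧
      q * Real.sin (ang v 1) = h * Real.cos (ang v 1) ∧ 0 < Real.sin (ang v 1) ∧
      p * Real.sin (ang v 2) = h * Real.cos (ang v 2) ∧ 0 < Real.sin (ang v 2) := by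
  have e1 : ang v 1 = angle (v 2 - v 1) (v 0 - v 1) := by
    rw [ang, show ((1:Fin 3) + 1) = 2 from by decide, show ((1:Fin 3) + 2) = 0 from by decide]
    rfl
  have e2 : ang v 2 = angle (v 0 - v 2) (v 1 - v 2) := by
    rw [ang, show ((2:Fin 3) + 1) = 0 from by decide, show ((2:Fin 3) + 2) = 1 from by decide]
    rfl
  have hne12 : v 1 ≠ v 2 := hv.injective.ne (by decide)
  have hne10 : v 0 ≠ v 1 := hv.injective.ne (by decide)
  have hne20 : v 0 ≠ v 2 := hv.injective.ne (by decide)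
  have hn0 : v 2 - v 1 ≠ 0 := sub_ne_zero.mpr hne12.symm
  have hX0 : v 0 - v 1 ≠ 0 := sub_ne_zero.mpr hne10
  have hY0 : v 0 - v 2 ≠ 0 := sub_ne_zero.mpr hne20
  set d : ℝ := ‖v 2 - v 1‖ with hd_def
  have hd : 0 < d := norm_pos_iff.mpr hn0
  have hcos1 : 0 < Real.cos (ang v 1) := by
    apply Real.cos_pos_of_mem_Ioo
    constructor
    · have := angle_nonneg (v 2 - v 1) (v 0 - v 1)
      rw [← e1] at this
      linarith [Real.pi_pos]
    · exact ha1
  have hcos2 : 0 < Real.cos (ang v 2) := by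
    apply Real.cos_pos_of_mem_Ioo
    constructor
    · have := angle_nonneg (v 0 - v 2) (v 1 - v 2)
      rw [← e2] at this
      linarith [Real.pi_pos]
    · exact ha2
  have hc1 : 0 < ⟪v 0 - v 1, v 2 - v 1⟫ := by
    have := hcos1
    rw [e1, cos_angle] at this
    have h2 := div_pos_iff.mp this
    rcases h2 with ⟨h3, _⟩ | ⟨_, h4⟩
    · rw [real_inner_comm]; exact h3
    · nlinarith [norm_pos_iff.mpr hn0, norm_pos_iff.mpr hX0, mul_pos (norm_pos_iff.mpr hn0) (norm_pos_iff.mpr hX0)]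
  have hc2 : 0 < ⟪v 0 - v 2, v 1 - v 2⟫ := by
    have := hcos2
    rw [e2, cos_angle] at this
    have h2 := div_pos_iff.mp this
    rcases h2 with ⟨h3, _⟩ | ⟨_, h4⟩
    · exact h3
    · nlinarith [mul_pos (norm_pos_iff.mpr hY0) (norm_pos_iff.mpr (sub_ne_zero.mpr hne12))]
  set q : ℝ := ⟪v 0 - v 1, v 2 - v 1⟫ / d with hq_def
  set p : ℝ := ⟪v 0 - v 2, v 1 - v 2⟫ / d with hp_def
  have hq : 0 < q := div_pos hc1 hd
  have hp : 0 < p := div_pos hc2 hd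
  have hpq : p + q = d := by
    have hdd : ⟪v 2 - v 1, v 2 - v 1⟫ = d ^ 2 := by
      rw [real_inner_self_eq_norm_sq]
    have hsplit : ⟪v 0 - v 2, v 1 - v 2⟫ =
        ⟪v 2 - v 1, v 2 - v 1⟫ - ⟪v 0 - v 1, v 2 - v 1⟫ := by
      have : v 0 - v 2 = (v 0 - v 1) - (v 2 - v 1) := by abel
      have h2 : v 1 - v 2 = -(v 2 - v 1) := by abel
      rw [this, h2, inner_neg_right, inner_sub_left]
      ring
    rw [hp_def, hq_def, hsplit, hdd]
    field_simp
    ring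
  set u : E2 := d⁻¹ • (v 2 - v 1) with hu_def
  have hu : ‖u‖ = 1 := by
    rw [hu_def, norm_smul, Real.norm_eq_abs, abs_of_pos (inv_pos.mpr hd)]
    field_simp; exact hd_def.symm
  have hn_eq : v 2 - v 1 = d • u := by
    rw [hu_def, smul_smul, mul_inv_cancel₀ hd.ne', one_smul]
  set F : E2 := v 1 + q • u with hF_def
  have hv1' : v 1 = F - q • u := by rw [hF_def]; abel
  have hv2' : v 2 = F + p • u := by
    rw [hF_def]
    have : v 2 = v 1 + (v 2 - v 1) := by abel
    rw [this, hn_eq]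
    have : (d : ℝ) • u = (q + p) • u := by rw [add_comm q p, ← hpq]
    rw [this, add_smul]
    abel
  have hFmem : F ∈ affineSpan ℝ ({v 1, v 2} : Set E2) := by
    have hmem := smul_vsub_vadd_mem_affineSpan_pair (k := ℝ) (q * d⁻¹) (v 1) (v 2)
    have : (q * d⁻¹) • (v 2 -ᵥ v 1) +ᵥ v 1 = F := by
      show (q * d⁻¹) • (v 2 - v 1) + v 1 = F
      rw [hn_eq, smul_smul, hF_def]
      have : q * d⁻¹ * d = q := by field_simp
      rw [this]; abel
    rwa [this] at hmem
  set w0 : E2 := v 0 - F with hw0_def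
  have hXuq : ⟪v 0 - v 1, u⟫ = q := by
    rw [hu_def, real_inner_smul_right, real_inner_comm, hq_def]
    field_simp [real_inner_comm]; exact real_inner_comm _ _
  have horth : ⟪u, w0⟫ = 0 := by
    have : w0 = (v 0 - v 1) - q • u := by rw [hw0_def, hF_def]; abel
    rw [this, inner_sub_right, real_inner_smul_right, real_inner_self_eq_norm_sq, hu,
      real_inner_comm, hXuq]
    ring
  have hw00 : w0 ≠ 0 := by
    intro hz
    have hv0F : v 0 = F := by
      have := hz
      rw [hw0_def] at this
      exact sub_eq_zero.mp this
    have hcol : Collinear ℝ ({v 0, v 1, v 2} : Set E2) :=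
      collinear_insert_of_mem_affineSpan_pair (hv0F ▸ hFmem)
    exact (affineIndependent_iff_not_collinear_of_ne (k := ℝ) (p := v)
      (show (0:Fin 3) ≠ 1 by decide) (show (0:Fin 3) ≠ 2 by decide)
      (show (1:Fin 3) ≠ 2 by decide)).mp hv hcol
  set h : ℝ := ‖w0‖ with hh_def
  have hh : 0 < h := norm_pos_iff.mpr hw00
  set w : E2 := h⁻¹ • w0 with hw_def
  have hw : ‖w‖ = 1 := by
    rw [hw_def, norm_smul, Real.norm_eq_abs, abs_of_pos (inv_pos.mpr hh)]
    field_simp; exact hh_def.symm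
  have hw0_eq : w0 = h • w := by
    rw [hw_def, smul_smul, mul_inv_cancel₀ hh.ne', one_smul]
  have huw : ⟪u, w⟫ = 0 := by
    rw [hw_def, real_inner_smul_right, horth, mul_zero]
  have hv0' : v 0 = F + h • w := by
    rw [← hw0_eq, hw0_def]; abel
  have S : TriSetup v F u w p q h :=
    ⟨hu, hw, huw, hv0', hv1', hv2', hp, hq, hh⟩
  -- altitude length
  have halt : altLen v 0 = h := by
    have halt_eq : altLen v 0 =
        Metric.infDist (v 0) ((affineSpan ℝ ({v 1, v 2} : Set E2) : Set E2)) := rfl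
    rw [halt_eq]
    apply le_antisymm
    · have := Metric.infDist_le_dist_of_mem (x := v 0) hFmem
      rwa [dist_eq_norm, ← hw0_def] at this
    · by_contra hlt
      push_neg at hlt
      obtain ⟨y, hy, hdy⟩ := (Metric.infDist_lt_iff
        ⟨v 1, subset_affineSpan ℝ _ (Set.mem_insert _ _)⟩).mp hlt
      -- y = v 1 + r • (v 2 - v 1)
      have hy' : (y -ᵥ v 1) +ᵥ v 1 ∈ affineSpan ℝ ({v 1, v 2} : Set E2) := by
        simpa using hy
      obtain ⟨r, hr⟩ := vadd_left_mem_affineSpan_pair.mp hy'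
      have hyeq : y = v 1 + r • (v 2 - v 1) := by
        have h5 : r • (v 2 - v 1) = y - v 1 := hr
        rw [h5]; abel
      have hv0y : v 0 - y = (q - r * d) • u + h • w := by
        rw [hyeq, hn_eq, hv1', hv0']
        match_scalars <;> ring
      have : dist (v 0) y = Real.sqrt ((q - r * d) ^ 2 + h ^ 2) := by
        rw [dist_eq_norm, hv0y, norm_ortho hu hw huw]
      rw [this] at hdy
      have h6 := Real.sqrt_le_sqrt (show h ^ 2 ≤ (q - r * d) ^ 2 + h ^ 2 by nlinarith [sq_nonneg (q - r * d)])
      rw [Real.sqrt_sq hh.le] at h6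
      linarith
  -- trig identities
  have hang1 : ang v 1 = angle (d • u) (q • u + h • w) := by
    rw [e1, hn_eq]
    congr 1
    rw [hv0', hv1']
    abel
  have hang2 : ang v 2 = angle ((p + q) • (-u)) (p • (-u) + h • w) := by
    rw [e2, angle_comm]
    congr 1
    · rw [hv1', hv2']
      match_scalars <;> ring
    · rw [hv0', hv2']
      match_scalars <;> ring
  have hu' : ‖(-u : E2)‖ = 1 := by rwa [norm_neg]
  have huw' : ⟪(-u : E2), w⟫ = 0 := by rw [inner_neg_left, huw, neg_zero]
  obtain ⟨hcosA, hsinA⟩ := angle_aux hu hw huw hd hh (a := q)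
  obtain ⟨hcosB, hsinB⟩ := angle_aux hu' hw huw' (d := p + q) (by linarith) hh (a := p)
  refine ⟨F, u, w, p, q, h, S, halt, ?_, ?_, ?_, ?_⟩
  · rw [hang1, hcosA, hsinA]; ring
  · rw [hang1, hsinA]; positivity
  · rw [hang2, hcosB, hsinB]; ring
  · rw [hang2, hsinB]; positivity

lemma base_le {th th' q q' h : ℝ} (hh : 0 < h) (hth' : th' < Real.pi / 2) (hle : th ≤ th')
    (hth0 : 0 ≤ th) (hs : 0 < Real.sin th) (hs' : 0 < Real.sin th')
    (hq : q * Real.sin th = h * Real.cos th) (hq' : q' * Real.sin th' = h * Real.cos th') :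
    q' ≤ q := by
  have hcos : Real.cos th' ≤ Real.cos th :=
    Real.cos_le_cos_of_nonneg_of_le_pi hth0 (by linarith [Real.pi_pos]) hle
  have hsin : Real.sin th ≤ Real.sin th' := by
    apply Real.strictMonoOn_sin.monotoneOn ⟨by linarith [Real.pi_pos], by linarith⟩
      ⟨by linarith [Real.pi_pos], hth'.le⟩ hle
  have hcosnn : 0 ≤ Real.cos th' := Real.cos_nonneg_of_mem_Icc ⟨by linarith [Real.pi_pos], hth'.le⟩
  have k1 : Real.cos th' * Real.sin th ≤ Real.cos th' * Real.sin th' :=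
    mul_le_mul_of_nonneg_left hsin hcosnn
  have k2 : Real.cos th' * Real.sin th' ≤ Real.cos th * Real.sin th' :=
    mul_le_mul_of_nonneg_right hcos hs'.le
  have key : h * (Real.cos th' * Real.sin th) ≤ h * (Real.cos th * Real.sin th') :=
    mul_le_mul_of_nonneg_left (k1.trans k2) hh.le
  nlinarith [mul_pos hs hs']

/-- The piecewise-affine 1-Lipschitz label-preserving map between two triangles in normal form. -/
def mapF (F u w F' u' w' : E2) (lam mu : ℝ) (x : E2) : E2 :=
  F' + pwl lam mu ⟪x - F, u⟫ • u' + ⟪x - F, w⟫ • w'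

lemma mapF_sub (F u w F' u' w' : E2) (lam mu : ℝ) (x : E2) :
    mapF F u w F' u' w' lam mu x - F' = pwl lam mu ⟪x - F, u⟫ • u' + ⟪x - F, w⟫ • w' := by
  unfold mapF; abel

lemma mapF_continuous (F u w F' u' w' : E2) (lam mu : ℝ) :
    Continuous (mapF F u w F' u' w' lam mu) := by
  unfold mapF
  have h1 : Continuous fun x : E2 => ⟪x - F, u⟫ :=
    (continuous_id.sub continuous_const).inner continuous_const
  have h2 : Continuous fun x : E2 => ⟪x - F, w⟫ :=
    (continuous_id.sub continuous_const).inner continuous_const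
  exact continuous_const.add (((pwl_continuous lam mu).comp h1).smul continuous_const) |>.add
    (h2.smul continuous_const)

section MapLemmas
variable {v v' : Fin 3 → E2} {F u w F' u' w' : E2} {p q h p' q' : ℝ}

lemma mapF_vertices (S : TriSetup v F u w p q h) (S' : TriSetup v' F' u' w' p' q' h) :
    ∀ i, mapF F u w F' u' w' (p'/p) (q'/q) (v i) = v' i := by
  have c0 : v 0 - F = (0:ℝ) • u + h • w := by rw [S.hv0]; match_scalars <;> ring
  have c1 : v 1 - F = (-q) • u + (0:ℝ) • w := by rw [S.hv1]; match_scalars <;> ring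
  have c2 : v 2 - F = p • u + (0:ℝ) • w := by rw [S.hv2]; match_scalars <;> ring
  intro i
  fin_cases i
  · show mapF F u w F' u' w' (p'/p) (q'/q) (v 0) = v' 0
    unfold mapF
    rw [c0, coord_u S.hu S.huw, coord_w S.hw S.huw, pwl_nonneg_case _ _ _ le_rfl, S'.hv0]
    rw [mul_zero, zero_smul]
    abel
  · show mapF F u w F' u' w' (p'/p) (q'/q) (v 1) = v' 1
    unfold mapF
    rw [c1, coord_u S.hu S.huw, coord_w S.hw S.huw,
      pwl_nonpos_case _ _ _ (by nlinarith [S.hq]), S'.hv1]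
    rw [zero_smul, add_zero]
    have : q'/q * (-q) = -q' := by field_simp [S.hq.ne']
    rw [this, neg_smul]
    abel
  · show mapF F u w F' u' w' (p'/p) (q'/q) (v 2) = v' 2
    unfold mapF
    rw [c2, coord_u S.hu S.huw, coord_w S.hw S.huw,
      pwl_nonneg_case _ _ _ (by nlinarith [S.hp]), S'.hv2]
    rw [zero_smul, add_zero]
    have : p'/p * p = p' := by field_simp [S.hp.ne']
    rw [this]

lemma mapF_leftInv (S : TriSetup v F u w p q h) (S' : TriSetup v' F' u' w' p' q' h) (x : E2) :
    mapF F' u' w' F u w (p/p') (q/q') (mapF F u w F' u' w' (p'/p) (q'/q) x) = x := by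
  set s := ⟪x - F, u⟫ with hs
  set t := ⟪x - F, w⟫ with ht
  have hsub := mapF_sub F u w F' u' w' (p'/p) (q'/q) x
  rw [← hs, ← ht] at hsub
  have hcu : ⟪mapF F u w F' u' w' (p'/p) (q'/q) x - F', u'⟫ = pwl (p'/p) (q'/q) s := by
    rw [hsub, coord_u S'.hu S'.huw]
  have hcw : ⟪mapF F u w F' u' w' (p'/p) (q'/q) x - F', w'⟫ = t := by
    rw [hsub, coord_w S'.hw S'.huw]
  rw [show mapF F' u' w' F u w (p/p') (q/q') (mapF F u w F' u' w' (p'/p) (q'/q) x) =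
    F + pwl (p/p') (q/q') ⟪mapF F u w F' u' w' (p'/p) (q'/q) x - F', u'⟫ • u +
      ⟪mapF F u w F' u' w' (p'/p) (q'/q) x - F', w'⟫ • w from rfl, hcu, hcw]
  have hinv : pwl (p/p') (q/q') (pwl (p'/p) (q'/q) s) = s := by
    have e1 : (p/p') = (p'/p)⁻¹ := by rw [inv_div]
    have e2 : (q/q') = (q'/q)⁻¹ := by rw [inv_div]
    rw [e1, e2]
    exact pwl_inv (div_pos S'.hp S.hp) (div_pos S'.hq S.hq) s
  rw [hinv]
  have hd := ortho_decomp S.hu S.hw S.huw (x - F)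
  rw [← hs, ← ht] at hd
  rw [add_assoc, ← hd]
  abel

lemma mapF_lipschitz (S : TriSetup v F u w p q h) (S' : TriSetup v' F' u' w' p' q' h)
    (hpp : p' ≤ p) (hqq : q' ≤ q) (x y : E2) :
    dist (mapF F u w F' u' w' (p'/p) (q'/q) x) (mapF F u w F' u' w' (p'/p) (q'/q) y) ≤
      dist x y := by
  set lam := p'/p
  set mu := q'/q
  set s1 := ⟪x - F, u⟫
  set t1 := ⟪x - F, w⟫
  set s2 := ⟪y - F, u⟫
  set t2 := ⟪y - F, w⟫
  have hdiff : mapF F u w F' u' w' lam mu x - mapF F u w F' u' w' lam mu y =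
      (pwl lam mu s1 - pwl lam mu s2) • u' + (t1 - t2) • w' := by
    unfold mapF
    rw [sub_smul, sub_smul]
    abel
  have hxy : x - y = (s1 - s2) • u + (t1 - t2) • w := by
    have hd := ortho_decomp S.hu S.hw S.huw (x - y)
    have e1 : ⟪x - y, u⟫ = s1 - s2 := by
      rw [show x - y = (x - F) - (y - F) by abel, inner_sub_left]
    have e2 : ⟪x - y, w⟫ = t1 - t2 := by
      rw [show x - y = (x - F) - (y - F) by abel, inner_sub_left]
    rw [e1, e2] at hd
    exact hd
  rw [dist_eq_norm, dist_eq_norm, hdiff, hxy, norm_ortho S'.hu S'.hw S'.huw,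
    norm_ortho S.hu S.hw S.huw]
  apply Real.sqrt_le_sqrt
  have hlip := pwl_lip (div_pos S'.hp S.hp) (by rw [div_le_one S.hp]; exact hpp)
    (div_pos S'.hq S.hq) (by rw [div_le_one S.hq]; exact hqq) s1 s2
  nlinarith [abs_nonneg (pwl lam mu s1 - pwl lam mu s2), sq_abs (pwl lam mu s1 - pwl lam mu s2),
    sq_abs (s1 - s2), abs_nonneg (s1 - s2)]

lemma mapF_mapsTo (S : TriSetup v F u w p q h) (S' : TriSetup v' F' u' w' p' q' h) :
    Set.MapsTo (mapF F u w F' u' w' (p'/p) (q'/q)) (Tri v) (Tri v') := by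
  intro x hx
  obtain ⟨a, ha0, ha1, hsu, hsw⟩ := S.coords hx
  set s := ⟪x - F, u⟫ with hs
  set σ := pwl (p'/p) (q'/q) s with hσ
  have ha0' : a 0 ≤ 1 := by have h1 := ha0 1; have h2 := ha0 2; linarith
  have h1a : 0 ≤ 1 - a 0 := by linarith
  have hub : σ ≤ (1 - a 0) * p' := by
    have e0 : 1 - a 0 = a 1 + a 2 := by linarith
    have hsle : s ≤ (1 - a 0) * p := by
      rw [hsu, e0]
      nlinarith [mul_nonneg (ha0 1) S.hq.le, mul_nonneg (ha0 1) S.hp.le]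
    calc σ ≤ (p'/p) * ((1 - a 0) * p) := pwl_le (div_pos S'.hp S.hp) (div_pos S'.hq S.hq)
            (by nlinarith [S.hp]) hsle
    _ = (1 - a 0) * p' := by field_simp [S.hp.ne']
  have hlb : -((1 - a 0) * q') ≤ σ := by
    have e0 : 1 - a 0 = a 1 + a 2 := by linarith
    have hsge : -((1 - a 0) * q) ≤ s := by
      rw [hsu, e0]
      nlinarith [mul_nonneg (ha0 2) S.hp.le, mul_nonneg (ha0 2) S.hq.le]
    have hge := pwl_ge (div_pos S'.hp S.hp) (div_pos S'.hq S.hq)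
      (show 0 ≤ (1 - a 0) * q by nlinarith [S.hq]) hsge
    calc -((1 - a 0) * q') = -((q'/q) * ((1 - a 0) * q)) := by field_simp [S.hq.ne']
    _ ≤ σ := hge
  have hpq' : 0 < p' + q' := by linarith [S'.hp, S'.hq]
  have hfx : mapF F u w F' u' w' (p'/p) (q'/q) x =
      a 0 • v' 0 + ((p' * (1 - a 0) - σ)/(p' + q')) • v' 1 +
        ((σ + q' * (1 - a 0))/(p' + q')) • v' 2 := by
    rw [S'.hv0, S'.hv1, S'.hv2]
    unfold mapF
    rw [← hs, ← hσ, hsw]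
    match_scalars <;> (field_simp [hpq'.ne']; try ring)
  rw [hfx]
  apply mem_tri_iff.mpr
  refine ⟨![a 0, (p' * (1 - a 0) - σ)/(p' + q'), (σ + q' * (1 - a 0))/(p' + q')], ?_, ?_, ?_⟩
  · intro i
    fin_cases i
    · exact ha0 0
    · show 0 ≤ (p' * (1 - a 0) - σ)/(p' + q')
      apply div_nonneg _ hpq'.le
      nlinarith
    · show 0 ≤ (σ + q' * (1 - a 0))/(p' + q')
      apply div_nonneg _ hpq'.le
      nlinarith
  · show a 0 + (p' * (1 - a 0) - σ)/(p' + q') + (σ + q' * (1 - a 0))/(p' + q') = 1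
    field_simp [hpq'.ne']
    ring
  · simp [Matrix.cons_val_zero, Matrix.cons_val_one, Matrix.head_cons]

end MapLemmas

lemma one_le_lipConst {v v' : Fin 3 → E2} {F u w : E2} {p q h : ℝ}
    (S : TriSetup v F u w p q h) (halt' : altLen v' 0 = h)
    {f : E2 → E2} (hf : IsLabelHomeo v v' f) : 1 ≤ lipConst v f := by
  obtain ⟨hcont, hbij, ⟨g, hgcont, hginv⟩, hvert⟩ := hf
  have hvmem : ∀ i, v i ∈ Tri v := fun i => subset_convexHull ℝ _ (Set.mem_range_self i)
  have hv'mem : ∀ i, v' i ∈ Tri v' := fun i => subset_convexHull ℝ _ (Set.mem_range_self i)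
  have hgmaps : Set.MapsTo g (Tri v') (Tri v) := by
    intro y hy
    obtain ⟨x, hx, hfx⟩ := hbij.surjOn hy
    rw [← hfx, hginv.1 hx]
    exact hx
  set c : ℝ → E2 := fun r => g (AffineMap.lineMap (v' 1) (v' 2) r) with hc
  have hseg : ∀ r ∈ Icc (0:ℝ) 1, AffineMap.lineMap (v' 1) (v' 2) r ∈ Tri v' := by
    intro r hr
    have hmem : AffineMap.lineMap (v' 1) (v' 2) r ∈ segment ℝ (v' 1) (v' 2) := by
      rw [segment_eq_image_lineMap]; exact ⟨r, hr, rfl⟩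
    exact (convex_convexHull ℝ _).segment_subset (hv'mem 1) (hv'mem 2) hmem
  have hccont : ContinuousOn c (Icc 0 1) := by
    apply hgcont.comp (AffineMap.lineMap_continuous).continuousOn
    intro r hr; exact hseg r hr
  have hlcont : ContinuousOn (fun r => ⟪c r - F, u⟫) (Icc 0 1) :=
    (hccont.sub continuousOn_const).inner continuousOn_const
  have hc0 : c 0 = v 1 := by
    rw [hc]; simp only [AffineMap.lineMap_apply_zero]
    rw [← hvert 1]; exact hginv.1 (hvmem 1)
  have hc1 : c 1 = v 2 := by
    rw [hc]; simp only [AffineMap.lineMap_apply_one]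
    rw [← hvert 2]; exact hginv.1 (hvmem 2)
  have hl0 : ⟪c 0 - F, u⟫ = -q := by
    have e : c 0 - F = (-q) • u + (0:ℝ) • w := by
      rw [hc0, S.hv1]; match_scalars <;> ring
    rw [e, coord_u S.hu S.huw]
  have hl1 : ⟪c 1 - F, u⟫ = p := by
    have e : c 1 - F = p • u + (0:ℝ) • w := by
      rw [hc1, S.hv2]; match_scalars <;> ring
    rw [e, coord_u S.hu S.huw]
  have h0mem : (0:ℝ) ∈ Icc (⟪c 0 - F, u⟫) (⟪c 1 - F, u⟫) := by
    rw [hl0, hl1]; exact ⟨by linarith [S.hq], S.hp.le⟩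
  obtain ⟨r, hr01, hrval⟩ := intermediate_value_Icc (by norm_num : (0:ℝ) ≤ 1) hlcont h0mem
  have hymem : AffineMap.lineMap (v' 1) (v' 2) r ∈ Tri v' := hseg r hr01
  have hxmem : c r ∈ Tri v := hgmaps hymem
  have hfxstar : f (c r) = AffineMap.lineMap (v' 1) (v' 2) r := hginv.2 hymem
  obtain ⟨a, ha0, ha1, hsu, hsw⟩ := S.coords hxmem
  have ht0 : 0 ≤ ⟪c r - F, w⟫ := by rw [hsw]; exact mul_nonneg (ha0 0) S.hh.le
  have ht1 : ⟪c r - F, w⟫ ≤ h := by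
    rw [hsw]
    have : a 0 ≤ 1 := by have := ha0 1; have := ha0 2; linarith
    nlinarith [S.hh]
  have hrval' : ⟪c r - F, u⟫ = 0 := hrval
  have hdecomp := ortho_decomp S.hu S.hw S.huw (c r - F)
  rw [hrval'] at hdecomp
  set t : ℝ := ⟪c r - F, w⟫ with htdef
  have hdist1 : dist (v 0) (c r) = h - t := by
    rw [dist_eq_norm]
    have hcr : c r = F + ((0:ℝ) • u + t • w) := by
      rw [← hdecomp]; abel
    have e : v 0 - c r = (0:ℝ) • u + (h - t) • w := by
      rw [S.hv0, hcr]
      match_scalars <;> ring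
    rw [e, norm_ortho S.hu S.hw S.huw]
    rw [show (0:ℝ)^2 + (h - t)^2 = (h - t)^2 by ring,
      Real.sqrt_sq (by linarith)]
  have hdist2 : h ≤ dist (v' 0) (f (c r)) := by
    rw [hfxstar]
    have hmem := AffineMap.lineMap_mem_affineSpan_pair (k := ℝ) r (v' 1) (v' 2)
    have hinf := Metric.infDist_le_dist_of_mem (x := v' 0) hmem
    have e : altLen v' 0 =
        Metric.infDist (v' 0) ((affineSpan ℝ ({v' 1, v' 2} : Set E2) : Set E2)) := rfl
    rw [e] at halt'
    linarith
  have hne : v 0 ≠ c r := by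
    intro he
    have : f (c r) = v' 0 := by rw [← he, hvert 0]
    rw [this, dist_self] at hdist2
    linarith [S.hh]
  have hle : edist (v 0) (c r) ≤ edist (f (v 0)) (f (c r)) := by
    rw [edist_dist, edist_dist]
    apply ENNReal.ofReal_le_ofReal
    calc dist (v 0) (c r) = h - t := hdist1
    _ ≤ h := by linarith
    _ ≤ dist (v' 0) (f (c r)) := hdist2
    _ = dist (f (v 0)) (f (c r)) := by rw [hvert 0]
  have hterm : 1 ≤ edist (f (v 0)) (f (c r)) / edist (v 0) (c r) := by
    rw [ENNReal.le_div_iff_mul_le (Or.inl (fun h0 => hne (by rwa [edist_eq_zero] at h0)))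
      (Or.inl (edist_ne_top _ _)), one_mul]
    exact hle
  refine hterm.trans ?_
  apply le_iSup₂_of_le (v 0) (hvmem 0)
  exact le_iSup₂ (f := fun y (_ : y ∈ Tri v) => edist (f (v 0)) (f y) / edist (v 0) y) (c r) hxmem

theorem stmt2 (v v' : Fin 3 → E2)
    (hv : AffineIndependent ℝ v) (hv' : AffineIndependent ℝ v')
    (hT : IsAcute v) (hT' : IsAcute v')
    (h2 : ang v 1 ≤ ang v' 1) (h3 : ang v 2 ≤ ang v' 2)
    (halt : altLen v 0 = altLen v' 0) :
    Lam v v' = 1 ∧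
    ∃ f : E2 → E2, IsLabelHomeo v v' f ∧ lipConst v f = 1 := by
  obtain ⟨F, u, w, p, q, h, S, haltv, hq1, hs1, hp2, hs2⟩ := exists_triSetup hv (hT 1) (hT 2)
  obtain ⟨F', u', w', p', q', h'', S', haltv', hq1', hs1', hp2', hs2'⟩ :=
    exists_triSetup hv' (hT' 1) (hT' 2)
  have hhh : h'' = h := by rw [← haltv', ← halt, haltv]
  subst hhh
  have hang1_nonneg : (0:ℝ) ≤ ang v 1 := EuclideanGeometry.angle_nonneg _ _ _
  have hang2_nonneg : (0:ℝ) ≤ ang v 2 := EuclideanGeometry.angle_nonneg _ _ _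
  have hq'le : q' ≤ q := base_le S.hh (hT' 1) h2 hang1_nonneg hs1 hs1' hq1 hq1'
  have hp'le : p' ≤ p := base_le S.hh (hT' 2) h3 hang2_nonneg hs2 hs2' hp2 hp2'
  set f := mapF F u w F' u' w' (p'/p) (q'/q) with hfdef
  set gmap := mapF F' u' w' F u w (p/p') (q/q') with hgdef
  have hleft : ∀ x, gmap (f x) = x := mapF_leftInv S S'
  have hright : ∀ y, f (gmap y) = y := mapF_leftInv S' S
  have hmapsTo : Set.MapsTo f (Tri v) (Tri v') := mapF_mapsTo S S'
  have hmapsTo' : Set.MapsTo gmap (Tri v') (Tri v) := mapF_mapsTo S' S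
  have hbij : Set.BijOn f (Tri v) (Tri v') := by
    refine ⟨hmapsTo, ?_, ?_⟩
    · intro x _ y _ hxy
      have := congrArg gmap hxy
      rwa [hleft, hleft] at this
    · intro y hy
      exact ⟨gmap y, hmapsTo' hy, hright y⟩
  have hlabel : IsLabelHomeo v v' f :=
    ⟨(mapF_continuous F u w F' u' w' (p'/p) (q'/q)).continuousOn, hbij,
      ⟨gmap, (mapF_continuous F' u' w' F u w (p/p') (q/q')).continuousOn,
        fun x _ => hleft x, fun y _ => hright y⟩,
      mapF_vertices S S'⟩
  have hlip : ∀ x y, dist (f x) (f y) ≤ dist x y := mapF_lipschitz S S' hp'le hq'le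
  have hupper : lipConst v f ≤ 1 := by
    unfold lipConst
    refine iSup₂_le fun x hx => iSup₂_le fun y hy => ?_
    apply ENNReal.div_le_of_le_mul
    rw [one_mul, edist_dist, edist_dist]
    exact ENNReal.ofReal_le_ofReal (hlip x y)
  have hlower : 1 ≤ lipConst v f := one_le_lipConst S haltv' hlabel
  have hconst : lipConst v f = 1 := le_antisymm hupper hlower
  constructor
  · apply le_antisymm
    · calc Lam v v' ≤ lipConst v f := iInf₂_le f hlabel
      _ = 1 := hconst
    · unfold Lam
      exact le_iInf₂ fun f' hf' => one_le_lipConst S haltv' hf'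
  · exact ⟨f, hlabel, hconst⟩
end
end

section
/- Let T and T' be non-obtuse labeled triangles in the Euclidean plane having the same area, and let {i,j,k} = {1,2,3}. If θ_i > θ'_i, θ_j < θ'_j and θ_k ≤ θ'_k, then M(T,T') = ‖e_i‖/‖e'_i‖ and this value is strictly greater than max(‖e_k‖/‖e'_k‖, ‖e'_k‖/‖e_k‖). -/
open Metric Set ENNReal

noncomputable section

open Metric InnerProductGeometry RealInnerProductSpace in
lemma alt_formula (p₁ p₂ p₃ : E2) (h23 : p₂ ≠ p₃) :
    Metric.infDist p₁ ((affineSpan ℝ ({p₂, p₃} : Set E2) : Set E2)) =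
      Real.sin (EuclideanGeometry.angle p₁ p₂ p₃) * dist p₁ p₂ := by
  set u : E2 := p₁ -ᵥ p₂ with hu
  set w : E2 := p₃ -ᵥ p₂ with hwdef
  have hw : w ≠ 0 := by
    simpa [hwdef] using vsub_ne_zero.mpr (Ne.symm h23)
  have hw2 : (0:ℝ) < ‖w‖ := norm_pos_iff.mpr hw
  set t₀ : ℝ := ⟪u, w⟫ / ‖w‖^2 with ht₀
  have key : ∀ t : ℝ, ‖u - t • w‖^2 = ‖u‖^2 - 2*t*⟪u, w⟫ + t^2*‖w‖^2 := by
    intro t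
    have h1 := norm_sub_sq_real u (t • w)
    rw [real_inner_smul_right, norm_smul] at h1
    rw [h1]
    simp [mul_pow, sq_abs]
    ring
  have hq : (t₀ • w +ᵥ p₂ : E2) ∈ (affineSpan ℝ ({p₂, p₃} : Set E2) : Set E2) :=
    smul_vsub_vadd_mem_affineSpan_pair t₀ p₂ p₃
  have hqd : dist p₁ (t₀ • w +ᵥ p₂ : E2) = ‖u - t₀ • w‖ := by
    rw [dist_eq_norm_vsub E2]
    congr 1
    rw [vsub_vadd_eq_vsub_sub]
  have hlow : ∀ x ∈ (affineSpan ℝ ({p₂, p₃} : Set E2) : Set E2),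
      ‖u - t₀ • w‖ ≤ dist p₁ x := by
    intro x hx
    have hx' : (x -ᵥ p₂) +ᵥ p₂ ∈ affineSpan ℝ ({p₂, p₃} : Set E2) := by
      simpa using hx
    obtain ⟨t, ht⟩ := vadd_left_mem_affineSpan_pair.mp hx'
    have hdx : dist p₁ x = ‖u - t • w‖ := by
      rw [dist_eq_norm_vsub E2]
      congr 1
      have ht' : t • w = x -ᵥ p₂ := by rw [hwdef]; exact ht
      rw [hu, ht']
      exact (vsub_sub_vsub_cancel_right p₁ x p₂).symm
    rw [hdx]
    have h1 := key t
    have h2 := key t₀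
    have h0 : t₀ * ‖w‖^2 = ⟪u, w⟫ := by
      rw [ht₀]; field_simp
    have hsq : ‖u - t₀ • w‖^2 ≤ ‖u - t • w‖^2 := by
      rw [h1, h2, ← h0]
      nlinarith [sq_nonneg ((t - t₀) * ‖w‖)]
    nlinarith [norm_nonneg (u - t₀ • w), norm_nonneg (u - t • w), hsq]
  have hclosed : IsClosed ((affineSpan ℝ ({p₂, p₃} : Set E2) : Set E2)) :=
    AffineSubspace.closed_of_finiteDimensional _
  have hne : ((affineSpan ℝ ({p₂, p₃} : Set E2) : Set E2)).Nonempty :=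
    ⟨p₂, left_mem_affineSpan_pair ℝ p₂ p₃⟩
  obtain ⟨y, hy, hyd⟩ := hclosed.exists_infDist_eq_dist hne p₁
  have hinf : Metric.infDist p₁ ((affineSpan ℝ ({p₂, p₃} : Set E2) : Set E2)) = ‖u - t₀ • w‖ := by
    refine le_antisymm ?_ ?_
    · rw [← hqd]; exact infDist_le_dist_of_mem hq
    · rw [hyd]; exact hlow y hy
  rw [hinf]
  have hang : EuclideanGeometry.angle p₁ p₂ p₃ = InnerProductGeometry.angle u w := rfl
  have hdist : dist p₁ p₂ = ‖u‖ := dist_eq_norm_vsub E2 p₁ p₂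
  rw [hang, hdist]
  have hs := sin_angle_mul_norm_mul_norm u w
  have hsq : (‖u - t₀ • w‖ * ‖w‖)^2 = ⟪u, u⟫ * ⟪w, w⟫ - ⟪u, w⟫ * ⟪u, w⟫ := by
    have h0 : t₀ * ‖w‖^2 = ⟪u, w⟫ := by
      rw [ht₀]; field_simp
    rw [mul_pow, key t₀, real_inner_self_eq_norm_sq, real_inner_self_eq_norm_sq]
    linear_combination (t₀*‖w‖^2 - ⟪u, w⟫) * h0
  have h3 : ‖u - t₀ • w‖ * ‖w‖ = Real.sin (InnerProductGeometry.angle u w) * ‖u‖ * ‖w‖ := by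
    have hnn : 0 ≤ ‖u - t₀ • w‖ * ‖w‖ := by positivity
    rw [← Real.sqrt_sq hnn, hsq, ← hs]
    ring
  exact mul_right_cancel₀ (ne_of_gt hw2) h3

lemma tri_facts (v : Fin 3 → E2) (hv : AffineIndependent ℝ v) (m : Fin 3) :
    altLen v m = Real.sin (ang v (m+1)) * edgeLen v (m+2) ∧
    altLen v m = Real.sin (ang v (m+2)) * edgeLen v (m+1) ∧
    0 < edgeLen v m ∧ 0 < altLen v m := by
  have e1 : ∀ m : Fin 3, m + 1 + 1 = m + 2 := by decide
  have e2 : ∀ m : Fin 3, m + 1 + 2 = m := by decide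
  have e3 : ∀ m : Fin 3, m + 2 + 1 = m := by decide
  have e4 : ∀ m : Fin 3, m + 2 + 2 = m + 1 := by decide
  have hne12 : ∀ m : Fin 3, m + 1 ≠ m + 2 := by decide
  have hinj := hv.injective
  have h23 : v (m+1) ≠ v (m+2) := fun h => (hne12 m) (hinj h)
  have hform1 : altLen v m = Real.sin (ang v (m+1)) * edgeLen v (m+2) := by
    have h := alt_formula (v m) (v (m+1)) (v (m+2)) h23
    simp only [altLen, edgeLen, ang]
    rw [e1 m, e2 m, e3 m, e4 m, EuclideanGeometry.angle_comm]
    exact h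
  have hform2 : altLen v m = Real.sin (ang v (m+2)) * edgeLen v (m+1) := by
    have h := alt_formula (v m) (v (m+2)) (v (m+1)) (Ne.symm h23)
    simp only [altLen, edgeLen, ang]
    rw [e3 m, e4 m, e1 m, e2 m, Set.pair_comm (v (m+1)) (v (m+2)), dist_comm (v (m+2)) (v m)]
    exact h
  have hepos : 0 < edgeLen v m := dist_pos.mpr (fun h => (hne12 m) (hinj h))
  have hmm : ∀ m : Fin 3, m ≠ m + 1 ∧ m ≠ m + 2 := by decide
  have hnm : v m ∉ affineSpan ℝ ({v (m+1), v (m+2)} : Set E2) := by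
    have h := hv.notMem_affineSpan_diff m {m+1, m+2}
    have hd : (({m+1, m+2} : Set (Fin 3)) \ {m}) = {m+1, m+2} := by
      rw [Set.diff_singleton_eq_self]
      simp only [Set.mem_insert_iff, Set.mem_singleton_iff]
      push_neg
      exact hmm m
    rw [hd, Set.image_pair] at h
    exact h
  have hclosed : IsClosed ((affineSpan ℝ ({v (m+1), v (m+2)} : Set E2) : Set E2)) :=
    AffineSubspace.closed_of_finiteDimensional _
  have hnemp : ((affineSpan ℝ ({v (m+1), v (m+2)} : Set E2) : Set E2)).Nonempty :=
    ⟨v (m+1), left_mem_affineSpan_pair ℝ _ _⟩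
  have hapos : 0 < altLen v m := (hclosed.notMem_iff_infDist_pos hnemp).mp hnm
  exact ⟨hform1, hform2, hepos, hapos⟩

lemma fin3_cover (i j k : Fin 3) (hij : i ≠ j) (hjk : j ≠ k) (hik : i ≠ k) :
    ∀ m, m = i ∨ m = j ∨ m = k := by
  revert i j k; decide

set_option maxHeartbeats 1000000 in
theorem stmt14 (v v' : Fin 3 → E2)
    (hv : AffineIndependent ℝ v) (hv' : AffineIndependent ℝ v')
    (hT : IsNonObtuse v) (hT' : IsNonObtuse v')
    (harea : triArea v = triArea v')
    (i j k : Fin 3) (hij : i ≠ j) (hjk : j ≠ k) (hik : i ≠ k)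
    (hi : ang v' i < ang v i) (hj : ang v j < ang v' j) (hk : ang v k ≤ ang v' k) :
    Mdist v v' = edgeLen v i / edgeLen v' i ∧
    max (edgeLen v k / edgeLen v' k) (edgeLen v' k / edgeLen v k) < Mdist v v' := by
  have e3 : ∀ m : Fin 3, m + 2 + 1 = m := by decide
  have e4 : ∀ m : Fin 3, m + 2 + 2 = m + 1 := by decide
  have cov3 : ∀ m : Fin 3, m = 0 ∨ m = 1 ∨ m = 2 := by decide
  have cover : ∀ m : Fin 3, m = i ∨ m = j ∨ m = k := fin3_cover i j k hij hjk hik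
  have hf1 : ∀ m, altLen v m = Real.sin (ang v (m+1)) * edgeLen v (m+2) :=
    fun m => (tri_facts v hv m).1
  have hf2 : ∀ m, altLen v m = Real.sin (ang v (m+2)) * edgeLen v (m+1) :=
    fun m => (tri_facts v hv m).2.1
  have hE : ∀ m, 0 < edgeLen v m := fun m => (tri_facts v hv m).2.2.1
  have hH : ∀ m, 0 < altLen v m := fun m => (tri_facts v hv m).2.2.2
  have hf1' : ∀ m, altLen v' m = Real.sin (ang v' (m+1)) * edgeLen v' (m+2) :=
    fun m => (tri_facts v' hv' m).1
  have hf2' : ∀ m, altLen v' m = Real.sin (ang v' (m+2)) * edgeLen v' (m+1) :=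
    fun m => (tri_facts v' hv' m).2.1
  have hE' : ∀ m, 0 < edgeLen v' m := fun m => (tri_facts v' hv' m).2.2.1
  have hH' : ∀ m, 0 < altLen v' m := fun m => (tri_facts v' hv' m).2.2.2
  have hSpos : ∀ m, 0 < Real.sin (ang v m) := by
    intro m
    have h := hf1 (m+2)
    rw [e3 m, e4 m] at h
    nlinarith [hH (m+2), hE (m+1)]
  have hSpos' : ∀ m, 0 < Real.sin (ang v' m) := by
    intro m
    have h := hf1' (m+2)
    rw [e3 m, e4 m] at h
    nlinarith [hH' (m+2), hE' (m+1)]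
  -- law of sines
  have hlosb : ∀ m, Real.sin (ang v (m+1)) * edgeLen v (m+2)
      = Real.sin (ang v (m+2)) * edgeLen v (m+1) :=
    fun m => (hf1 m).symm.trans (hf2 m)
  have hlosb' : ∀ m, Real.sin (ang v' (m+1)) * edgeLen v' (m+2)
      = Real.sin (ang v' (m+2)) * edgeLen v' (m+1) :=
    fun m => (hf1' m).symm.trans (hf2' m)
  have hlos : ∀ m n : Fin 3,
      edgeLen v m * Real.sin (ang v n) = edgeLen v n * Real.sin (ang v m) := by
    have c01 : (0:Fin 3)+1 = 1 := by decide
    have c02 : (0:Fin 3)+2 = 2 := by decide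
    have c11 : (1:Fin 3)+1 = 2 := by decide
    have c12 : (1:Fin 3)+2 = 0 := by decide
    have c21 : (2:Fin 3)+1 = 0 := by decide
    have c22 : (2:Fin 3)+2 = 1 := by decide
    have b0 := hlosb 0; have b1 := hlosb 1; have b2 := hlosb 2
    rw [c01, c02] at b0
    rw [c11, c12] at b1
    rw [c21, c22] at b2
    intro m n
    rcases cov3 m with rfl | rfl | rfl <;> rcases cov3 n with rfl | rfl | rfl <;>
      first
        | ring1
        | linear_combination b0
        | linear_combination -b0
        | linear_combination b1
        | linear_combination -b1
        | linear_combination b2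
        | linear_combination -b2
  have hlos' : ∀ m n : Fin 3,
      edgeLen v' m * Real.sin (ang v' n) = edgeLen v' n * Real.sin (ang v' m) := by
    have c01 : (0:Fin 3)+1 = 1 := by decide
    have c02 : (0:Fin 3)+2 = 2 := by decide
    have c11 : (1:Fin 3)+1 = 2 := by decide
    have c12 : (1:Fin 3)+2 = 0 := by decide
    have c21 : (2:Fin 3)+1 = 0 := by decide
    have c22 : (2:Fin 3)+2 = 1 := by decide
    have b0 := hlosb' 0; have b1 := hlosb' 1; have b2 := hlosb' 2
    rw [c01, c02] at b0
    rw [c11, c12] at b1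
    rw [c21, c22] at b2
    intro m n
    rcases cov3 m with rfl | rfl | rfl <;> rcases cov3 n with rfl | rfl | rfl <;>
      first
        | ring1
        | linear_combination b0
        | linear_combination -b0
        | linear_combination b1
        | linear_combination -b1
        | linear_combination b2
        | linear_combination -b2
  -- equal areas in product form
  have harea0 : edgeLen v 0 * edgeLen v 2 * Real.sin (ang v 1)
      = edgeLen v' 0 * edgeLen v' 2 * Real.sin (ang v' 1) := by
    have c01 : (0:Fin 3)+1 = 1 := by decide
    have c02 : (0:Fin 3)+2 = 2 := by decide
    have h0 := hf1 0; have h0' := hf1' 0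
    rw [c01, c02] at h0 h0'
    have h := harea
    simp only [triArea] at h
    rw [h0, h0'] at h
    linarith
  have hP3 : ∀ m n p : Fin 3, m ≠ n → n ≠ p → m ≠ p →
      edgeLen v m * edgeLen v n * Real.sin (ang v p)
        = edgeLen v' m * edgeLen v' n * Real.sin (ang v' p) := by
    have q1 : edgeLen v 0 * edgeLen v 1 * Real.sin (ang v 2)
        = edgeLen v' 0 * edgeLen v' 1 * Real.sin (ang v' 2) := by
      linear_combination harea0 + edgeLen v 0 * hlos 1 2 - edgeLen v' 0 * hlos' 1 2
    have q2 : edgeLen v 1 * edgeLen v 2 * Real.sin (ang v 0)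
        = edgeLen v' 1 * edgeLen v' 2 * Real.sin (ang v' 0) := by
      linear_combination harea0 + edgeLen v 2 * hlos 1 0 - edgeLen v' 2 * hlos' 1 0
    intro m n p hmn hnp hmp
    rcases cov3 m with rfl | rfl | rfl <;> rcases cov3 n with rfl | rfl | rfl <;>
      rcases cov3 p with rfl | rfl | rfl <;>
      first
        | exact absurd rfl hmn
        | exact absurd rfl hnp
        | exact absurd rfl hmp
        | linear_combination harea0
        | linear_combination q1
        | linear_combination q2
  -- sine comparisons
  have hang_nonneg : ∀ (u : Fin 3 → E2) (m : Fin 3), 0 ≤ ang u m :=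
    fun u m => EuclideanGeometry.angle_nonneg _ _ _
  have hpi := Real.pi_pos
  have hmem : ∀ (u : Fin 3 → E2), IsNonObtuse u → ∀ m,
      ang u m ∈ Set.Icc (-(Real.pi/2)) (Real.pi/2) := by
    intro u hu m
    exact ⟨by linarith [hang_nonneg u m], hu m⟩
  have hiS : Real.sin (ang v' i) < Real.sin (ang v i) :=
    Real.strictMonoOn_sin (hmem v' hT' i) (hmem v hT i) hi
  have hjS : Real.sin (ang v j) < Real.sin (ang v' j) :=
    Real.strictMonoOn_sin (hmem v hT j) (hmem v' hT' j) hj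
  have hkS : Real.sin (ang v k) ≤ Real.sin (ang v' k) :=
    Real.strictMonoOn_sin.monotoneOn (hmem v hT k) (hmem v' hT' k) hk
  -- main inequalities
  have I1 : edgeLen v j * edgeLen v' i < edgeLen v i * edgeLen v' j := by
    have e1' : edgeLen v i * edgeLen v' j * (Real.sin (ang v j) * Real.sin (ang v' i))
        = edgeLen v j * edgeLen v' i * (Real.sin (ang v i) * Real.sin (ang v' j)) := by
      linear_combination (edgeLen v' j * Real.sin (ang v' i)) * hlos i j
        + (edgeLen v j * Real.sin (ang v i)) * hlos' j i
    have hq : Real.sin (ang v j) * Real.sin (ang v' i)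
        < Real.sin (ang v i) * Real.sin (ang v' j) := by
      nlinarith [hiS, hjS, hSpos j, hSpos' i, hSpos i, hSpos' j]
    nlinarith [e1', hq, mul_pos (hE j) (hE' i), mul_pos (hSpos j) (hSpos' i)]
  have I2 : edgeLen v k * edgeLen v' i < edgeLen v i * edgeLen v' k := by
    have e1' : edgeLen v i * edgeLen v' k * (Real.sin (ang v k) * Real.sin (ang v' i))
        = edgeLen v k * edgeLen v' i * (Real.sin (ang v i) * Real.sin (ang v' k)) := by
      linear_combination (edgeLen v' k * Real.sin (ang v' i)) * hlos i k
        + (edgeLen v k * Real.sin (ang v i)) * hlos' k i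
    have hq : Real.sin (ang v k) * Real.sin (ang v' i)
        < Real.sin (ang v i) * Real.sin (ang v' k) := by
      nlinarith [mul_pos (sub_pos.mpr hiS) (hSpos k),
        mul_nonneg (le_of_lt (hSpos i)) (sub_nonneg.mpr hkS), hSpos' i, hSpos k]
    nlinarith [e1', hq, mul_pos (hE k) (hE' i), mul_pos (hSpos k) (hSpos' i)]
  have I3 : edgeLen v' i * edgeLen v' j ≤ edgeLen v i * edgeLen v j := by
    have h := hP3 i j k hij hjk hik
    nlinarith [h, hSpos k,
      mul_nonneg (le_of_lt (mul_pos (hE' i) (hE' j))) (sub_nonneg.mpr hkS)]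
  have I4 : edgeLen v' i * edgeLen v' k < edgeLen v i * edgeLen v k := by
    have h := hP3 i k j hik (Ne.symm hjk) hij
    nlinarith [h, hSpos j,
      mul_pos (mul_pos (hE' i) (hE' k)) (sub_pos.mpr hjS)]
  have I5 : edgeLen v' i < edgeLen v i := by
    have h5a : edgeLen v j * edgeLen v' i * (edgeLen v' i * edgeLen v' j)
        < edgeLen v i * edgeLen v' j * (edgeLen v i * edgeLen v j) := by
      calc edgeLen v j * edgeLen v' i * (edgeLen v' i * edgeLen v' j)
          ≤ edgeLen v j * edgeLen v' i * (edgeLen v i * edgeLen v j) :=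
            mul_le_mul_of_nonneg_left I3 (le_of_lt (mul_pos (hE j) (hE' i)))
        _ < edgeLen v i * edgeLen v' j * (edgeLen v i * edgeLen v j) :=
            mul_lt_mul_of_pos_right I1 (mul_pos (hE i) (hE j))
    have h5b : edgeLen v' i * edgeLen v' i < edgeLen v i * edgeLen v i := by
      nlinarith [h5a, mul_pos (hE j) (hE' j)]
    nlinarith [h5b, hE i, hE' i]
  -- altitude ratios
  have d1 : ∀ m : Fin 3, m ≠ m + 2 := by decide
  have d2 : ∀ m : Fin 3, m + 2 ≠ m + 1 := by decide
  have d3 : ∀ m : Fin 3, m ≠ m + 1 := by decide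
  have hAlt : ∀ m, altLen v' m / altLen v m = edgeLen v m / edgeLen v' m := by
    intro m
    rw [div_eq_div_iff (ne_of_gt (hH m)) (ne_of_gt (hE' m))]
    rw [hf1 m, hf1' m]
    have h := hP3 m (m+2) (m+1) (d1 m) (d2 m) (d3 m)
    linear_combination -h
  -- upper bounds
  have ub : ∀ m, edgeLen v' m / edgeLen v m ≤ edgeLen v i / edgeLen v' i ∧
      edgeLen v m / edgeLen v' m ≤ edgeLen v i / edgeLen v' i := by
    intro m
    rcases cover m with rfl | rfl | rfl
    · constructor
      · rw [div_le_div_iff₀ (hE m) (hE' m)]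
        nlinarith [I5, hE' m, hE m]
      · exact le_refl _
    · constructor
      · rw [div_le_div_iff₀ (hE m) (hE' i)]
        nlinarith [I3]
      · rw [div_le_div_iff₀ (hE' m) (hE' i)]
        nlinarith [I1]
    · constructor
      · rw [div_le_div_iff₀ (hE m) (hE' i)]
        nlinarith [I4]
      · rw [div_le_div_iff₀ (hE' m) (hE' i)]
        nlinarith [I2]
  have hMeq : Mdist v v' = edgeLen v i / edgeLen v' i := by
    simp only [Mdist]
    rw [hAlt 0, hAlt 1, hAlt 2]
    apply le_antisymm
    · exact max_le (max_le (max_le (ub 0).1 (ub 1).1) (ub 2).1)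
        (max_le (max_le (ub 0).2 (ub 1).2) (ub 2).2)
    · have hmem2 : ∀ m : Fin 3, edgeLen v m / edgeLen v' m ≤
          max (max (edgeLen v 0 / edgeLen v' 0) (edgeLen v 1 / edgeLen v' 1))
            (edgeLen v 2 / edgeLen v' 2) := by
        intro m
        rcases cov3 m with rfl | rfl | rfl
        · exact le_max_of_le_left (le_max_left _ _)
        · exact le_max_of_le_left (le_max_right _ _)
        · exact le_max_right _ _
      exact le_trans (hmem2 i) (le_max_right _ _)
  refine ⟨hMeq, ?_⟩
  rw [hMeq]
  apply max_lt
  · rw [div_lt_div_iff₀ (hE' k) (hE' i)]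
    nlinarith [I2]
  · rw [div_lt_div_iff₀ (hE k) (hE' i)]
    nlinarith [I4]
end
end
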